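/- arXiv:2203.00670 — 7 statements merged into one kernel-verified Lean document; each statement's English description precedes it below -/
import Mathlib

section
/- For a prime p and integers 0 ≤ a < b, the sum over i from a+1 to b of (1 + v_p(i)), where v_p(i) is the p-adic valuation of i, is at most (p/(p-1))·(b-a) + log_p(b). -/
/-!
Legendre's formula writes `∑_{a < i ≤ b} v_p(i) = v_p(b!) - v_p(a!)` as
`∑_{1 ≤ k ≤ log_p b} (⌊b/p^k⌋ - ⌊a/p^k⌋)`. Each term is at most `(b - a)/p^k + 1`; the first parts
sum to at most `(b - a)/(p - 1)` and the `+1`s to `⌊log_p b⌋`. Adding the `b - a` ones gives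
`(p/(p-1))(b - a) + log_p b`.
-/

open Finset Nat

lemma padicValNat_factorial_add_sum_Ioc {p : ℕ} [Fact p.Prime] {a b : ℕ} (hab : a ≤ b) :
    padicValNat p a ! + ∑ i ∈ Ioc a b, padicValNat p i = padicValNat p b ! := by
  induction b, hab using Nat.le_induction with
  | base => simp
  | succ n hn ih =>
    rw [sum_Ioc_succ_top hn, ← add_assoc, ih, factorial_succ,
      padicValNat.mul (succ_ne_zero n) (factorial_ne_zero n), add_comm]

lemma natCast_div_sub_natCast_div_le (a b q : ℕ) :
    ((b / q : ℕ) : ℝ) - (a / q : ℕ) ≤ ((b : ℝ) - a) / q + 1 := by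
  rw [← Nat.floor_div_eq_div (K := ℝ), ← Nat.floor_div_eq_div (K := ℝ), sub_div]
  have hb : (⌊(b : ℝ) / q⌋₊ : ℝ) ≤ b / q := Nat.floor_le (by positivity)
  have ha : (a : ℝ) / q < ⌊(a : ℝ) / q⌋₊ + 1 := Nat.lt_floor_add_one _
  linarith

lemma geom_sum_Ico_one_inv_le {r : ℝ} (hr : 1 < r) (n : ℕ) :
    ∑ k ∈ Ico 1 n, r⁻¹ ^ k ≤ (r - 1)⁻¹ := by
  have hr0 : 0 < r := by linarith
  calc ∑ k ∈ Ico 1 n, r⁻¹ ^ k ≤ r⁻¹ ^ 1 / (1 - r⁻¹) :=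
        geom_sum_Ico_le_of_lt_one (by positivity) (inv_lt_one_of_one_lt₀ hr)
    _ = (r - 1)⁻¹ := by field_simp

lemma sum_Ioc_padicValNat_le {p : ℕ} (hp : p.Prime) {a b : ℕ} (hab : a ≤ b) :
    ∑ i ∈ Ioc a b, (padicValNat p i : ℝ) ≤ ((b : ℝ) - a) / (p - 1) + Nat.log p b := by
  have : Fact p.Prime := ⟨hp⟩
  have hp1 : (1 : ℝ) < p := by exact_mod_cast hp.one_lt
  set K := Nat.log p b + 1
  have hlegendre : ∑ i ∈ Ioc a b, (padicValNat p i : ℝ) =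
      ∑ k ∈ Ico 1 K, (((b / p ^ k : ℕ) : ℝ) - (a / p ^ k : ℕ)) := by
    have h := congrArg ((↑) : ℕ → ℝ) (padicValNat_factorial_add_sum_Ioc (p := p) hab)
    rw [padicValNat_factorial (lt_succ_of_le (Nat.log_mono_right hab)),
      padicValNat_factorial (lt_succ_self _)] at h
    push_cast at h
    rw [sum_sub_distrib]
    linarith
  calc ∑ i ∈ Ioc a b, (padicValNat p i : ℝ)
      ≤ ∑ k ∈ Ico 1 K, (((b : ℝ) - a) * (p : ℝ)⁻¹ ^ k + 1) := by
        rw [hlegendre]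
        refine sum_le_sum fun k _ => ?_
        simpa [div_eq_mul_inv] using natCast_div_sub_natCast_div_le a b (p ^ k)
    _ = ((b : ℝ) - a) * ∑ k ∈ Ico 1 K, (p : ℝ)⁻¹ ^ k + Nat.log p b := by
        simp [sum_add_distrib, mul_sum, K]
    _ ≤ ((b : ℝ) - a) * ((p : ℝ) - 1)⁻¹ + Nat.log p b := by
        have hba : (a : ℝ) ≤ b := by exact_mod_cast hab
        gcongr
        exact geom_sum_Ico_one_inv_le hp1 K
    _ = ((b : ℝ) - a) / (p - 1) + Nat.log p b := by rw [div_eq_mul_inv]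

/-- For a prime `p` and integers `0 ≤ a < b`, the sum over `i` from `a+1` to `b` of
`1 + v_p(i)` is at most `(p/(p-1))·(b-a) + log_p(b)`. -/
theorem stmt0 (p : ℕ) (hp : p.Prime) (a b : ℕ) (hab : a < b) :
    (∑ i ∈ Finset.Icc (a + 1) b, (1 + (padicValNat p i : ℝ))) ≤
      (p : ℝ) / ((p : ℝ) - 1) * ((b : ℝ) - (a : ℝ)) + Real.log b / Real.log p := by
  have hp1 : (p : ℝ) - 1 ≠ 0 := sub_ne_zero.mpr (by exact_mod_cast hp.one_lt.ne')
  have hval := sum_Ioc_padicValNat_le hp hab.le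
  have hlog : (Nat.log p b : ℝ) ≤ Real.log b / Real.log p := by
    rw [Real.log_div_log]; exact Real.natLog_le_logb b p
  have hsplit : (p : ℝ) / (p - 1) * (b - a) = (b - a) + (b - a) / (p - 1) := by
    field_simp; ring
  rw [Icc_add_one_left_eq_Ioc, sum_add_distrib, sum_const, card_Ioc, nsmul_one,
    Nat.cast_sub hab.le]
  linarith
end

section
/- Let |−| : C → Γ be a valuation on a stable category, i.e., a function on objects with values in a partially ordered abelian group such that |X| ≥ 0, |X ⊕ Y| = |X| + |Y|, and |Y| ≤ |X| + |Z| for every cofiber sequence X → Y → Z. If X lies in the thick subcategory generated by Y, then there exists a natural number N such that |Σ^k X| ≤ N · max over a finite set of shifts of |Σ^j Y|; in particular, for a rotation-invariant valuation (one with |ΣX| = |X|), there exists N with |X| ≤ N · |Y|. -/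
open CategoryTheory CategoryTheory.Limits CategoryTheory.Pretriangulated

universe v u

variable {C : Type u} [Category.{v} C] [HasZeroObject C] [HasShift C ℤ]
  [Preadditive C] [∀ n : ℤ, (CategoryTheory.shiftFunctor C n).Additive] [Pretriangulated C]

/-- `ThickGen Y X` : the object `X` lies in the thick subcategory generated by `Y`,
i.e. `X` is built from `Y` in finitely many steps by (de)suspension, extensions in
distinguished triangles, and retracts. -/
inductive ThickGen (Y : C) : C → Prop
  | base : ThickGen Y Y
  | shift (Z : C) (k : ℤ) : ThickGen Y Z → ThickGen Y ((shiftFunctor C k).obj Z)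
  | ext (T : Triangle C) (hT : T ∈ distTriang C) :
      ThickGen Y T.obj₁ → ThickGen Y T.obj₃ → ThickGen Y T.obj₂
  | retract (Z A : C) (i : Z ⟶ A) (r : A ⟶ Z) (hir : i ≫ r = 𝟙 Z) :
      ThickGen Y A → ThickGen Y Z

/-! A split monomorphism `i : Z ⟶ A` has a cone `W` with `A ≅ Z ⊞ W`, so `|Z| ≤ |Z| + |W| = |A|`;
together with subadditivity on triangles this lets each step building `X` from `Y` be bounded.
Shifts force one to bound all `|X⟦k⟧|` at once, by elements of the additive submonoid generated
by the `|Y⟦j⟧|`; this works because shifts of distinguished triangles are distinguished. For a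
rotation invariant valuation that submonoid is `ℕ • |Y|`. -/

lemma exists_iso_biprod_of_retract {Z A : C} (i : Z ⟶ A) (r : A ⟶ Z) (hir : i ≫ r = 𝟙 Z) :
    ∃ W : C, Nonempty (A ≅ Z ⊞ W) := by
  obtain ⟨W, p, w, hT⟩ := distinguished_cocone_triangle i
  have : Mono i := (IsSplitMono.mk' ⟨r, hir⟩).mono
  obtain ⟨e, -⟩ := exists_iso_binaryBiproduct_of_distTriang _ hT
    (Triangle.mor₃_eq_zero_of_mono₁ _ hT this)
  exact ⟨W, ⟨e⟩⟩

lemma valuation_shift_eq_of_rotation_invariant {D Γ : Type*} [Category D] [HasShift D ℤ]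
    (w : D → Γ) (hiso : ∀ {A B : D}, Nonempty (A ≅ B) → w A = w B)
    (hrot : ∀ Z : D, w ((shiftFunctor D (1 : ℤ)).obj Z) = w Z) (Y : D) (j : ℤ) :
    w ((shiftFunctor D j).obj Y) = w Y := by
  induction j using Int.induction_on with
  | zero => exact hiso ⟨(shiftFunctorZero D ℤ).app Y⟩
  | succ n ih => rw [hiso ⟨(shiftFunctorAdd D (n : ℤ) 1).app Y⟩, Functor.comp_obj, hrot, ih]
  | pred n ih =>
    rwa [hiso ⟨(shiftFunctorAdd' D (-(n : ℤ) - 1) 1 (-(n : ℤ)) (by ring)).app Y⟩,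
      Functor.comp_obj, hrot] at ih

section Valuation

variable {Γ : Type*} [AddCommMonoid Γ] [PartialOrder Γ] [IsOrderedAddMonoid Γ] (v : C → Γ)

lemma valuation_le_of_retract (hiso : ∀ {A B : C}, Nonempty (A ≅ B) → v A = v B)
    (h0 : ∀ Z : C, 0 ≤ v Z) (hsum : ∀ A B : C, v (A ⊞ B) = v A + v B)
    {Z A : C} (i : Z ⟶ A) (r : A ⟶ Z) (hir : i ≫ r = 𝟙 Z) : v Z ≤ v A := by
  obtain ⟨W, e⟩ := exists_iso_biprod_of_retract i r hir
  rw [hiso e, hsum]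
  exact le_add_of_nonneg_right (h0 W)

lemma ThickGen.exists_le_mem_closure_shifts
    (hiso : ∀ {A B : C}, Nonempty (A ≅ B) → v A = v B)
    (h0 : ∀ Z : C, 0 ≤ v Z) (hsum : ∀ A B : C, v (A ⊞ B) = v A + v B)
    (htri : ∀ T : Triangle C, (T ∈ distTriang C) → v T.obj₂ ≤ v T.obj₁ + v T.obj₃)
    {X Y : C} (hXY : ThickGen Y X) (k : ℤ) :
    ∃ g ∈ AddSubmonoid.closure (Set.range fun j : ℤ => v ((shiftFunctor C j).obj Y)),
      v ((shiftFunctor C k).obj X) ≤ g := by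
  induction hXY generalizing k with
  | base => exact ⟨_, AddSubmonoid.subset_closure (Set.mem_range_self k), le_rfl⟩
  | shift Z m _ ih =>
    obtain ⟨g, hg, hle⟩ := ih (m + k)
    exact ⟨g, hg, (hiso ⟨((shiftFunctorAdd C m k).app Z).symm⟩).le.trans hle⟩
  | ext T hT _ _ ih₁ ih₃ =>
    obtain ⟨g₁, hg₁, hle₁⟩ := ih₁ k
    obtain ⟨g₃, hg₃, hle₃⟩ := ih₃ k
    exact ⟨g₁ + g₃, add_mem hg₁ hg₃,
      (htri _ (Triangle.shift_distinguished T hT k)).trans (add_le_add hle₁ hle₃)⟩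
  | retract Z A i r hir _ ih =>
    obtain ⟨g, hg, hle⟩ := ih k
    have hretract : (shiftFunctor C k).map i ≫ (shiftFunctor C k).map r = 𝟙 _ := by
      rw [← Functor.map_comp, hir, CategoryTheory.Functor.map_id]
    exact ⟨g, hg, (valuation_le_of_retract v hiso h0 hsum _ _ hretract).trans hle⟩

end Valuation

theorem stmt2_general
    {Γ : Type*} [AddCommMonoid Γ] [PartialOrder Γ] [IsOrderedAddMonoid Γ]
    (v : C → Γ)
    (hiso : ∀ {A B : C}, Nonempty (A ≅ B) → v A = v B)
    (h0 : ∀ Z : C, 0 ≤ v Z)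
    (hsum : ∀ A B : C, v (A ⊞ B) = v A + v B)
    (htri : ∀ T : Triangle C, (T ∈ distTriang C) → v T.obj₂ ≤ v T.obj₁ + v T.obj₃)
    (X Y : C) (hXY : ThickGen Y X) :
    (∃ (s : Finset ℤ) (N : ℤ → ℕ),
      v X ≤ ∑ j ∈ s, N j • v ((shiftFunctor C j).obj Y)) ∧
    ((∀ Z : C, v ((shiftFunctor C (1 : ℤ)).obj Z) = v Z) →
      ∃ N : ℕ, v X ≤ N • v Y) := by
  obtain ⟨g, hg, hle⟩ := hXY.exists_le_mem_closure_shifts v hiso h0 hsum htri 0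
  rw [hiso ⟨(shiftFunctorZero C ℤ).app X⟩] at hle
  refine ⟨?_, fun hrot => ?_⟩
  · obtain ⟨N, rfl⟩ := AddSubmonoid.mem_closure_range_iff.mp hg
    exact ⟨N.support, N, hle⟩
  · have hrange : Set.range (fun j : ℤ => v ((shiftFunctor C j).obj Y)) ⊆ {v Y} := by
      rintro _ ⟨j, rfl⟩
      exact valuation_shift_eq_of_rotation_invariant v hiso hrot Y j
    obtain ⟨N, rfl⟩ :=
      AddSubmonoid.mem_closure_singleton.mp (AddSubmonoid.closure_mono hrange hg)
    exact ⟨N, hle⟩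

/-- If `|−| : C → Γ` is a valuation on a stable category (nonnegative, additive on sums,
subadditive on cofiber sequences, compatible with the shift via `σ`) and `X` lies in the
thick subcategory generated by `Y`, then `|X|` is bounded by a finite nonnegative
`ℤ[σ^{±1}]`-combination of shifts of `|Y|`; in particular if the valuation is rotation
invariant there is an `N : ℕ` with `|X| ≤ N·|Y|`. -/
theorem stmt2 [HasBinaryBiproducts C]
    {Γ : Type*} [AddCommMonoid Γ] [PartialOrder Γ] [IsOrderedAddMonoid Γ]
    (v : C → Γ) (σ : Γ →+ Γ) (hσ : Monotone σ)
    (hiso : ∀ {A B : C}, Nonempty (A ≅ B) → v A = v B)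
    (h0 : ∀ Z : C, 0 ≤ v Z)
    (hsum : ∀ A B : C, v (A ⊞ B) = v A + v B)
    (htri : ∀ T : Triangle C, (T ∈ distTriang C) → v T.obj₂ ≤ v T.obj₁ + v T.obj₃)
    (hshift : ∀ Z : C, v ((shiftFunctor C (1 : ℤ)).obj Z) = σ (v Z))
    (X Y : C) (hXY : ThickGen Y X) :
    (∃ (s : Finset ℤ) (N : ℤ → ℕ),
      v X ≤ ∑ j ∈ s, N j • v ((shiftFunctor C j).obj Y)) ∧
    ((∀ Z : C, v ((shiftFunctor C (1 : ℤ)).obj Z) = v Z) →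
      ∃ N : ℕ, v X ≤ N • v Y) :=
  stmt2_general v hiso h0 hsum htri X Y hXY
end

section
/- Let p(n) denote the number of partitions of n into powers of 2 (binary partitions). Then log p(n) = (1/(2 log 2)) (log n)^2 + O(log log n · log n); in particular there exists a constant C such that |log p(n) − (log n)^2/(2 log 2)| ≤ C · max(1, log log n · log n) for all n ≥ 2. -/
/-- The number of partitions of `n` into powers of `2` (binary partitions). -/
noncomputable def binaryPartitions (n : ℕ) : ℕ :=
  Nat.card {P : n.Partition // ∀ i ∈ P.parts, ∃ k : ℕ, i = 2 ^ k}

/-!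
A binary partition of `n` is determined by the multiplicities of its parts `2 ^ k`, `k ≤ K`,
where `K = ⌊log₂ n⌋`, and the multiplicity of `2 ^ k` is at most `n / 2 ^ k`; hence
`p(n) ≤ ∏_{k ≤ K} (n / 2 ^ k + 1)`. Conversely, multiplicities at most `(n / K) / 2 ^ (k + 1)` of
the parts `2 ^ (k + 1)`, `k < K`, use up at most `n`, and the rest can be filled with ones, so
`p(n) ≥ ∏_{k < K} ((n / K) / 2 ^ (k + 1) + 1)`. The logarithms of both products are
`∑_{k < K} (log n - k log 2) + O(K log K)`, and since `K log 2 ≤ log n < (K + 1) log 2` this is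
`(log n)² / (2 log 2) + O(log n · log log n)`.
-/

open Finset Real

theorem Finset.natCard_pi_fin {ι : Type*} (S : Finset ι) (f : ι → ℕ) :
    Nat.card ((s : S) → Fin (f s)) = ∏ s ∈ S, f s := by
  rw [Nat.card_pi]
  simp only [Nat.card_eq_fintype_card, Fintype.card_fin]
  exact Finset.prod_coe_sort S f

namespace Nat.Partition

variable {n : ℕ}

theorem count_mul_le (P : n.Partition) (s : ℕ) : P.parts.count s * s ≤ n := by
  obtain ⟨u, hu⟩ := le_iff_exists_add.mp
    (Multiset.le_count_iff_replicate_le.mp le_rfl :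
      Multiset.replicate (P.parts.count s) s ≤ P.parts)
  calc P.parts.count s * s = (Multiset.replicate (P.parts.count s) s).sum := by simp
    _ ≤ P.parts.sum := by
      rw [congrArg Multiset.sum hu, Multiset.sum_add]
      exact Nat.le_add_right _ _
    _ = n := P.parts_sum

theorem count_le_div (P : n.Partition) (s : ℕ) : P.parts.count s ≤ n / s := by
  rcases s.eq_zero_or_pos with rfl | hs
  · simp [Multiset.count_eq_zero_of_notMem fun h => (P.parts_pos h).ne' rfl]
  · exact (Nat.le_div_iff_mul_le hs).2 (count_mul_le P s)

theorem card_restricted_le_prod (p : ℕ → Prop) (S : Finset ℕ) (hS : ∀ i ≤ n, p i → i ∈ S) :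
    Nat.card {P : n.Partition // ∀ i ∈ P.parts, p i} ≤ ∏ s ∈ S, (n / s + 1) := by
  classical
  let counts (P : {P : n.Partition // ∀ i ∈ P.parts, p i}) (s : S) : Fin (n / s + 1) :=
    ⟨P.1.parts.count (s : ℕ), Nat.lt_succ_of_le (count_le_div P.1 s)⟩
  have counts_injective : Function.Injective counts := by
    rintro ⟨P, hP⟩ ⟨Q, hQ⟩ h
    ext1; ext1; ext1 m
    by_cases hm : m ∈ P.parts ∨ m ∈ Q.parts
    · have hmS : m ∈ S := hm.elim (fun h => hS m (le_of_mem_parts h) (hP m h))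
        (fun h => hS m (le_of_mem_parts h) (hQ m h))
      exact congrArg Fin.val (congrFun h ⟨m, hmS⟩)
    · push Not at hm
      rw [Multiset.count_eq_zero_of_notMem hm.1, Multiset.count_eq_zero_of_notMem hm.2]
  calc _ ≤ Nat.card ((s : S) → Fin (n / s + 1)) :=
        Nat.card_le_card_of_injective _ counts_injective
    _ = ∏ s ∈ S, (n / s + 1) := S.natCard_pi_fin fun s => n / s + 1

def padWithOnes (l : Multiset ℕ) (hl0 : 0 ∉ l) (hl : l.sum ≤ n) : n.Partition where
  parts := l + Multiset.replicate (n - l.sum) 1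
  parts_pos {i} hi := by
    rcases Multiset.mem_add.1 hi with hi | hi
    · exact Nat.pos_of_ne_zero fun h => hl0 (h ▸ hi)
    · exact (Multiset.eq_of_mem_replicate hi).symm ▸ one_pos
  parts_sum := by simp [Nat.add_sub_of_le hl]

theorem mem_padWithOnes_parts {l : Multiset ℕ} {hl0 : 0 ∉ l} {hl : l.sum ≤ n} {i : ℕ}
    (hi : i ∈ (padWithOnes l hl0 hl).parts) : i ∈ l ∨ i = 1 :=
  (Multiset.mem_add.1 hi).imp_right Multiset.eq_of_mem_replicate

theorem count_padWithOnes_parts {l : Multiset ℕ} {hl0 : 0 ∉ l} {hl : l.sum ≤ n} {i : ℕ}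
    (hi : i ≠ 1) : (padWithOnes l hl0 hl).parts.count i = l.count i := by
  simp [padWithOnes, Multiset.count_replicate, hi.symm]

theorem prod_le_card_restricted {b : ℕ} (p : ℕ → Prop) (S : Finset ℕ) (hS0 : 0 ∉ S)
    (hS1 : 1 ∉ S) (hp1 : p 1) (hpS : ∀ s ∈ S, p s) (hb : #S * b ≤ n) :
    ∏ s ∈ S, (b / s + 1) ≤ Nat.card {P : n.Partition // ∀ i ∈ P.parts, p i} := by
  classical
  let l (m : (s : S) → Fin (b / s + 1)) : Multiset ℕ := ∑ s, Multiset.replicate (m s) (s : ℕ)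
  have mem_l {m i} (hi : i ∈ l m) : i ∈ S := by
    obtain ⟨s, -, hs⟩ := Multiset.mem_sum.1 hi
    exact Multiset.eq_of_mem_replicate hs ▸ s.2
  have sum_l_le (m : (s : S) → Fin (b / s + 1)) : (l m).sum ≤ n :=
    calc (l m).sum = ∑ s, (m s : ℕ) * s := by simp [l, Multiset.sum_sum]
      _ ≤ ∑ _s : S, b := sum_le_sum fun s _ =>
          (Nat.le_div_iff_mul_le (Nat.pos_of_ne_zero fun h => hS0 (h ▸ s.2))).1
            (Nat.lt_succ_iff.1 (m s).2)
      _ = #S * b := by simp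
      _ ≤ n := hb
  let toPartition (m : (s : S) → Fin (b / s + 1)) : {P : n.Partition // ∀ i ∈ P.parts, p i} :=
    ⟨padWithOnes (l m) (fun h => hS0 (mem_l h)) (sum_l_le m),
      fun i hi => (mem_padWithOnes_parts hi).elim (fun h => hpS i (mem_l h)) (· ▸ hp1)⟩
  have count_toPartition (m) (s : S) : (toPartition m).1.parts.count (s : ℕ) = m s := by
    rw [count_padWithOnes_parts fun h => hS1 (h ▸ s.2)]
    simp [l, Multiset.count_sum', Multiset.count_replicate]
  have toPartition_injective : Function.Injective toPartition := fun m m' h =>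
    funext fun s => Fin.ext <| by rw [← count_toPartition m s, ← count_toPartition m' s, h]
  calc ∏ s ∈ S, (b / s + 1) = Nat.card ((s : S) → Fin (b / s + 1)) :=
        (S.natCard_pi_fin fun s => b / s + 1).symm
    _ ≤ _ := Nat.card_le_card_of_injective _ toPartition_injective

end Nat.Partition

theorem Nat.natCast_div_add_one_le_two_mul_div {n d : ℕ} (hd : 0 < d) (hdn : d ≤ n) :
    ((n / d + 1 : ℕ) : ℝ) ≤ 2 * n / d := by
  have hd' : (0 : ℝ) < d := by exact_mod_cast hd
  have h1 : (1 : ℝ) ≤ n / d := (one_le_div hd').2 (by exact_mod_cast hdn)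
  push_cast
  linarith [Nat.cast_div_le (α := ℝ) (m := n) (n := d),
    show (2 * n / d : ℝ) = n / d + n / d by ring]

theorem Nat.div_lt_natCast_div_add_one (n d : ℕ) : (n : ℝ) / d < ((n / d + 1 : ℕ) : ℝ) := by
  rw [← Nat.floor_div_eq_div (K := ℝ), Nat.cast_add_one]
  exact Nat.lt_floor_add_one _

theorem sum_range_succ_natCast (K : ℕ) : ∑ k ∈ range (K + 1), (k : ℝ) = K * (K + 1) / 2 := by
  induction K with
  | zero => simp
  | succ K ih => rw [sum_range_succ, ih]; push_cast; ring

theorem binaryPartitions_le_prod (n : ℕ) :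
    binaryPartitions n ≤ ∏ k ∈ range (Nat.log 2 n + 1), (n / 2 ^ k + 1) := by
  rw [binaryPartitions, ← prod_image (f := fun s => n / s + 1)
    fun k _ l _ h => Nat.pow_right_injective le_rfl h]
  refine Nat.Partition.card_restricted_le_prod _ _ fun i hi ⟨k, hk⟩ => ?_
  subst hk
  exact mem_image_of_mem _ (mem_range.2 (Nat.lt_succ_of_le (Nat.le_log_of_pow_le one_lt_two hi)))

theorem prod_le_binaryPartitions (n : ℕ) :
    ∏ k ∈ range (Nat.log 2 n), (n / Nat.log 2 n / 2 ^ (k + 1) + 1) ≤ binaryPartitions n := by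
  have hinj : Function.Injective fun k => 2 ^ (k + 1) := fun k l h =>
    Nat.succ_injective (Nat.pow_right_injective le_rfl h)
  rw [← prod_image (f := fun s => n / Nat.log 2 n / s + 1) fun k _ l _ h => hinj h]
  refine Nat.Partition.prod_le_card_restricted _ _ (by simp) (by simp) ⟨0, rfl⟩ ?_ ?_
  · simp only [mem_image]
    rintro _ ⟨k, -, rfl⟩
    exact ⟨k + 1, rfl⟩
  · rw [card_image_of_injective _ hinj, card_range]
    exact Nat.mul_div_le n _

theorem one_le_binaryPartitions (n : ℕ) : 1 ≤ binaryPartitions n :=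
  (Finset.one_le_prod' fun _ _ => Nat.le_add_left 1 _).trans (prod_le_binaryPartitions n)

theorem log_binaryPartitions_le {n : ℕ} (hn : n ≠ 0) :
    log (binaryPartitions n) ≤
      (Nat.log 2 n + 1) * (log n + log 2) - log 2 * (Nat.log 2 n * (Nat.log 2 n + 1) / 2) := by
  set K := Nat.log 2 n
  have hterm (k : ℕ) (hk : k ∈ range (K + 1)) :
      log ((n / 2 ^ k + 1 : ℕ) : ℝ) ≤ log n + log 2 - k * log 2 := by
    have hkn : 2 ^ k ≤ n := Nat.pow_le_of_le_log hn (Nat.lt_succ_iff.1 (mem_range.1 hk))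
    calc log ((n / 2 ^ k + 1 : ℕ) : ℝ) ≤ log (2 * n / 2 ^ k) := by
          refine log_le_log (by positivity) ?_
          exact_mod_cast Nat.natCast_div_add_one_le_two_mul_div (by positivity) hkn
      _ = log n + log 2 - k * log 2 := by
          rw [log_div (by positivity) (by positivity), log_mul two_ne_zero (by positivity),
            log_pow]
          ring
  calc log (binaryPartitions n) ≤ log (∏ k ∈ range (K + 1), (n / 2 ^ k + 1 : ℕ) : ℕ) :=
        log_le_log (by exact_mod_cast one_le_binaryPartitions n)
          (by exact_mod_cast binaryPartitions_le_prod n)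
    _ = ∑ k ∈ range (K + 1), log ((n / 2 ^ k + 1 : ℕ) : ℝ) := by
        rw [Nat.cast_prod, log_prod fun k _ => by positivity]
    _ ≤ ∑ k ∈ range (K + 1), (log n + log 2 - k * log 2) := sum_le_sum hterm
    _ = _ := by
        rw [sum_sub_distrib, ← sum_mul, sum_range_succ_natCast]
        simp only [sum_const, card_range, nsmul_eq_mul]
        push_cast
        ring

theorem le_log_binaryPartitions (n : ℕ) :
    Nat.log 2 n * (log n - log (Nat.log 2 n)) - log 2 * (Nat.log 2 n * (Nat.log 2 n + 1) / 2) ≤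
      log (binaryPartitions n) := by
  set K := Nat.log 2 n
  have hterm (k : ℕ) (hk : k ∈ range K) :
      log n - log K - (k + 1) * log 2 ≤ log ((n / K / 2 ^ (k + 1) + 1 : ℕ) : ℝ) := by
    have hK : 0 < K := Nat.zero_lt_of_lt (mem_range.1 hk)
    have hn : 0 < n := Nat.pos_of_ne_zero fun h => by simp [K, h] at hK
    calc log n - log K - (k + 1) * log 2 = log ((n : ℝ) / (K * 2 ^ (k + 1) : ℕ)) := by
          push_cast
          rw [log_div (by positivity) (by positivity), log_mul (by positivity) (by positivity),
            log_pow]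
          push_cast
          ring
      _ ≤ log ((n / K / 2 ^ (k + 1) + 1 : ℕ) : ℝ) := by
          rw [Nat.div_div_eq_div_mul]
          exact log_le_log (by positivity) (Nat.div_lt_natCast_div_add_one _ _).le
  have gauss : ∑ k ∈ range K, ((k : ℝ) + 1) = K * (K + 1) / 2 := by
    rw [← sum_range_succ_natCast, sum_range_succ']
    push_cast
    simp
  calc _ = ∑ k ∈ range K, (log n - log K - (k + 1) * log 2) := by
        rw [sum_sub_distrib, ← sum_mul, gauss]
        simp only [sum_const, card_range, nsmul_eq_mul]
        ring
    _ ≤ ∑ k ∈ range K, log ((n / K / 2 ^ (k + 1) + 1 : ℕ) : ℝ) := sum_le_sum hterm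
    _ = log (∏ k ∈ range K, (n / K / 2 ^ (k + 1) + 1 : ℕ) : ℕ) := by
        rw [Nat.cast_prod, log_prod fun k _ => by positivity]
    _ ≤ log (binaryPartitions n) :=
        log_le_log (by exact_mod_cast Finset.prod_pos fun _ _ => Nat.succ_pos _)
          (by exact_mod_cast prod_le_binaryPartitions n)

theorem le_two_mul_max_one_log_mul {L : ℝ} (hL : 0 < L) : L ≤ 2 * max 1 (log L * L) := by
  have h : L - 1 ≤ log L * L := by
    have := mul_le_mul_of_nonneg_right (one_sub_inv_le_log_of_pos hL) hL.le
    rwa [sub_mul, inv_mul_cancel₀ hL.ne', one_mul] at this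
  linarith [le_max_left 1 (log L * L), le_max_right 1 (log L * L)]

theorem mul_log_le_of_mul_le {a K L : ℝ} (ha : 1 / 2 < a) (hK : 1 ≤ K) (hKL : K * a ≤ L) :
    K * log K ≤ 6 * max 1 (log L * L) := by
  have hL : 0 < L := by nlinarith
  have hK2L : K ≤ 2 * L := by nlinarith
  have hlogK : log K ≤ log L + 1 := by
    have hlog_a : -log a ≤ 1 := by
      have := one_sub_inv_le_log_of_pos (by linarith : 0 < a)
      have : a⁻¹ < 2 := by rw [inv_lt_comm₀ (by linarith) two_pos]; linarith
      linarith
    calc log K ≤ log (L / a) :=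
          log_le_log (by linarith) (by rw [le_div_iff₀ (by linarith)]; exact hKL)
      _ = log L - log a := log_div hL.ne' (by linarith)
      _ ≤ log L + 1 := by linarith
  have hKlogL : K * log L ≤ 2 * max 1 (log L * L) := by
    rcases le_or_gt 0 (log L) with h | h
    · nlinarith [le_max_right 1 (log L * L)]
    · nlinarith [le_max_left 1 (log L * L)]
  nlinarith [le_two_mul_max_one_log_mul hL, log_nonneg hK]

theorem abs_sub_sq_div_le {a K L x : ℝ} (ha : 1 / 2 < a) (ha1 : a ≤ 1) (hK : 1 ≤ K)
    (hKL : K * a ≤ L) (hLK : L ≤ (K + 1) * a)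
    (hx_upper : x ≤ (K + 1) * (L + a) - a * (K * (K + 1) / 2))
    (hx_lower : K * (L - log K) - a * (K * (K + 1) / 2) ≤ x) :
    |x - L ^ 2 / (2 * a)| ≤ 8 * max 1 (log L * L) := by
  have ha0 : 0 < a := by linarith
  -- with `t = L / a`, both gaps are quadratic polynomials in `t - K ∈ [0, 1]`
  have upper_gap :
      (K + 1) * (L + a) - a * (K * (K + 1) / 2) - (3 / 2 * L + a) ≤ L ^ 2 / (2 * a) := by
    rw [le_div_iff₀ (by positivity)]
    nlinarith [sq_nonneg (L - K * a), mul_nonneg ha0.le (sub_nonneg.2 hKL)]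
  have lower_gap : L ^ 2 / (2 * a) ≤ K * L - a * (K * (K + 1) / 2) + (L + a) / 2 := by
    rw [div_le_iff₀ (by positivity)]
    nlinarith [mul_nonneg (sub_nonneg.2 hKL) (sub_nonneg.2 hLK)]
  have hM := le_two_mul_max_one_log_mul (by nlinarith : 0 < L)
  have hKlogK := mul_log_le_of_mul_le ha hK hKL
  have h1 := le_max_left 1 (log L * L)
  rw [abs_le]
  constructor <;> linarith

/-- `log p(n) = (1/(2 log 2)) (log n)^2 + O(log log n · log n)` for binary partitions. -/
theorem stmt3 : ∃ C : ℝ, ∀ n : ℕ, 2 ≤ n →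
    |Real.log (binaryPartitions n) - (Real.log n) ^ 2 / (2 * Real.log 2)| ≤
      C * max 1 (Real.log (Real.log n) * Real.log n) := by
  refine ⟨8, fun n hn => ?_⟩
  have hlog2 : 0 < log 2 := log_pos one_lt_two
  have hK : 1 ≤ Nat.log 2 n := Nat.le_log_of_pow_le one_lt_two (by simpa using hn)
  have hKL : (Nat.log 2 n : ℝ) * log 2 ≤ log n := by
    rw [← le_div_iff₀ hlog2, ← logb]
    exact natLog_le_logb n 2
  have hLK : log n < (Nat.log 2 n + 1) * log 2 := by
    rw [← div_lt_iff₀ hlog2, ← logb, ← natFloor_logb_natCast]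
    exact Nat.lt_floor_add_one _
  exact abs_sub_sq_div_le (by linarith [log_two_gt_d9]) (by linarith [log_two_lt_d9])
    (by exact_mod_cast hK) hKL hLK.le (log_binaryPartitions_le (by omega))
    (le_log_binaryPartitions n)
end

section
/- Fix a prime p and a constant c ≥ 1. Let R be a graded polynomial algebra over a field with generators x_1, x_2, ... where the degree of x_i lies in the interval [p^i/c, c·p^i]. Then the logarithm of the total dimension of R in degrees ≤ n satisfies log(dim R_{≤n}) = (1/(2 log p)) (log n)^2 + O(log log n · log n). -/
/-!
Count monomials by boxes. Only the generators with `b ^ (i + 1) ≤ c n` can occur in a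
monomial of degree `≤ n`, and the exponent of `x_i` is at most `n / d_i ≈ n / b ^ (i + 1)`,
so `log (dim R_{≤n}) ≤ ∑_{i < k} (log (2cn) - (i + 1) log b) ≤ (log n + log 2c)² / (2 log b)`.
Conversely, splitting the budget `n` evenly among the first `m = ⌊log n / log b⌋` generators
gives a box of monomials with `log`-size `∑_{i < m} (log n - (i + 1) log b - log (cm))`, which
is `(log n)² / (2 log b) - O(log n · log log n)`; the `log m` lost per generator is where the
error term comes from.
-/

/-- The number of monomials of total degree at most `n` in a graded polynomial algebra
whose `i`-th generator (for `i ≥ 1`, here indexed by `i - 1`) has degree `d (i-1)`;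
this is the dimension of `R_{≤ n}`. -/
noncomputable def polyCountLE (d : ℕ → ℕ) (n : ℕ) : ℕ :=
  Nat.card {a : ℕ →₀ ℕ // (a.sum fun i m => m * d i) ≤ n}

open Finset Finsupp Real

section WeightedMonomials

variable {σ : Type*} (w : σ → ℕ) (n : ℕ)

lemma mul_le_weight (f : σ →₀ ℕ) (i : σ) : f i * w i ≤ weight w f := by
  simpa [weight_apply, sum_single_index] using
    Finsupp.single_le_sum f (g := fun j c => c • w j) (fun _ _ => Nat.zero_le _) i

lemma setOf_weight_le_subset_finsupp (hw : ∀ i, 0 < w i) (s : Finset σ)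
    (hs : ∀ i, w i ≤ n → i ∈ s) :
    {a | weight w a ≤ n} ⊆ (↑(s.finsupp fun i => range (n / w i + 1)) : Set (σ →₀ ℕ)) := by
  intro a ha
  have hmul (i : σ) : a i * w i ≤ n := (mul_le_weight w a i).trans ha
  refine mem_finsupp_iff.2 ⟨fun i hi => hs i ?_, fun i _ => ?_⟩
  · exact (Nat.le_mul_of_pos_left _ (Nat.pos_of_ne_zero (mem_support_iff.1 hi))).trans (hmul i)
  · exact mem_range.2 (Nat.lt_succ_of_le ((Nat.le_div_iff_mul_le (hw i)).2 (hmul i)))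

lemma finsupp_subset_setOf_weight_le (s : Finset σ) (b : σ → ℕ)
    (hb : ∑ i ∈ s, b i * w i ≤ n) :
    (↑(s.finsupp fun i => range (b i + 1)) : Set (σ →₀ ℕ)) ⊆ {a | weight w a ≤ n} := by
  intro a ha
  obtain ⟨hsupp, hab⟩ := mem_finsupp_iff.1 ha
  calc weight w a = ∑ i ∈ s, a i * w i :=
        (weight_apply w a).trans (sum_of_support_subset a hsupp _ fun _ _ => zero_smul ℕ _)
    _ ≤ ∑ i ∈ s, b i * w i := by
        gcongr with i hi
        exact Nat.le_of_lt_succ (mem_range.1 (hab i hi))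
    _ ≤ n := hb

end WeightedMonomials

section Counting

variable {d : ℕ → ℕ} {n : ℕ}

lemma polyCountLE_eq_ncard :
    polyCountLE d n = {a : ℕ →₀ ℕ | weight d a ≤ n}.ncard := rfl

lemma polyCountLE_le_prod (hpos : ∀ i, 0 < d i) (s : Finset ℕ) (hs : ∀ i, d i ≤ n → i ∈ s) :
    polyCountLE d n ≤ ∏ i ∈ s, (n / d i + 1) := by
  rw [polyCountLE_eq_ncard]
  simpa using Set.ncard_le_ncard (setOf_weight_le_subset_finsupp d n hpos s hs)

lemma prod_le_polyCountLE (hpos : ∀ i, 0 < d i) (s : Finset ℕ) (hs : ∀ i, d i ≤ n → i ∈ s)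
    (t : Finset ℕ) (b : ℕ → ℕ) (hb : ∑ i ∈ t, b i * d i ≤ n) :
    ∏ i ∈ t, (b i + 1) ≤ polyCountLE d n := by
  rw [polyCountLE_eq_ncard]
  have hfin := (s.finsupp fun i => range (n / d i + 1)).finite_toSet.subset
    (setOf_weight_le_subset_finsupp d n hpos s hs)
  simpa using Set.ncard_le_ncard (finsupp_subset_setOf_weight_le d n t b hb) hfin

end Counting

lemma lt_floor_log_div_log_iff {b x : ℝ} (hb : 1 < b) (hx : 0 < x) (i : ℕ) :
    i < ⌊log x / log b⌋₊ ↔ b ^ (i + 1) ≤ x := by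
  rw [Nat.lt_iff_add_one_le, Nat.le_floor_iff' (Nat.succ_ne_zero i), le_div_iff₀ (log_pos hb),
    pow_le_iff_le_log (by linarith) hx, Nat.cast_succ]

lemma sum_range_sub_succ_mul (a P : ℝ) (hP : P ≠ 0) (k : ℕ) :
    ∑ i ∈ range k, (a - (i + 1) * P) = (a ^ 2 - (a - k * P) ^ 2) / (2 * P) - k * P / 2 := by
  induction k with
  | zero => simp
  | succ k ih =>
    rw [sum_range_succ, ih]
    field_simp
    push_cast
    ring

lemma le_three_mul_max_one_log_mul {x : ℝ} (hx : 0 ≤ x) : x ≤ 3 * max 1 (log x * x) := by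
  rcases le_or_gt x 3 with h | h
  · linarith [le_max_left 1 (log x * x)]
  · have hlog : 1 ≤ log x := by
      rw [le_log_iff_exp_le (by linarith)]
      linarith [exp_one_lt_d9]
    nlinarith [le_max_right 1 (log x * x)]

lemma affine_le_mul_max_one_log_mul {x A B D : ℝ} (hx : 0 ≤ x) (hA : 0 ≤ A) (hB : 0 ≤ B)
    (hD : 0 ≤ D) :
    A * x + B + D * max 0 (log x * x) ≤ (3 * A + B + D) * max 1 (log x * x) := by
  have h3 := le_three_mul_max_one_log_mul hx
  have h1 := le_max_left 1 (log x * x)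
  have h0 : max 0 (log x * x) ≤ max 1 (log x * x) := max_le_max zero_le_one le_rfl
  nlinarith

lemma floor_mul_log_mul_floor_le {x P c : ℝ} (hx : 0 ≤ x) (hP : 0 < P) (hc : 1 ≤ c) :
    (⌊x / P⌋₊ : ℝ) * log (c * ⌊x / P⌋₊) ≤ (max 0 (log x * x) + |log (c / P)| * x) / P := by
  set m := ⌊x / P⌋₊
  have hrhs : 0 ≤ (max 0 (log x * x) + |log (c / P)| * x) / P := by positivity
  rcases Nat.eq_zero_or_pos m with hm | hm
  · simpa [hm] using hrhs
  have hm1 : (1 : ℝ) ≤ m := by exact_mod_cast hm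
  have hmx : (m : ℝ) ≤ x / P := Nat.floor_le (by positivity)
  have hx0 : 0 < x := by
    have := hm1.trans hmx
    rw [le_div_iff₀ hP] at this
    linarith
  have hlog : 0 ≤ log (c * m) := log_nonneg (by nlinarith)
  calc (m : ℝ) * log (c * m) ≤ x / P * log (c * (x / P)) := by
        gcongr
    _ = (log x * x + log (c / P) * x) / P := by
        rw [show c * (x / P) = c / P * x by ring, log_mul (by positivity) hx0.ne']
        ring
    _ ≤ (max 0 (log x * x) + |log (c / P)| * x) / P := by
        gcongr
        · exact le_max_right _ _
        · exact le_abs_self _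

lemma log_natCast_div_add_one_le {c B : ℝ} {n q : ℕ} (hc : 0 < c) (hB : 0 < B)
    (hq : B / c ≤ q) (hBn : B ≤ c * n) :
    log ((n / q + 1 : ℕ) : ℝ) ≤ log (2 * c * n) - log B := by
  have hquot : ((n / q : ℕ) : ℝ) ≤ c * n / B :=
    calc ((n / q : ℕ) : ℝ) ≤ n / q := Nat.cast_div_le
      _ ≤ n / (B / c) := by gcongr
      _ = c * n / B := by field_simp
  have hone : 1 ≤ c * n / B := (one_le_div hB).2 hBn
  have hn : (0 : ℝ) < n := pos_of_mul_pos_right (hBn.trans_lt' hB) hc.le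
  calc log ((n / q + 1 : ℕ) : ℝ) ≤ log (2 * c * n / B) := by
        gcongr
        push_cast
        linarith [show 2 * c * n / B = 2 * (c * n / B) by ring]
    _ = log (2 * c * n) - log B := log_div (by positivity) hB.ne'

lemma sub_log_le_log_natCast_div_add_one {c B : ℝ} {n m q : ℕ} (hc : 0 < c) (hB : 0 < B)
    (hn : 0 < n) (hm : 0 < m) (hq : 0 < q) (hqB : q ≤ c * B) :
    log n - log B - log (c * m) ≤ log ((n / (m * q) + 1 : ℕ) : ℝ) := by
  calc log n - log B - log (c * m) = log (n / (c * m * B)) := by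
        rw [log_div (by positivity) (by positivity), log_mul (by positivity) hB.ne']
        ring
    _ ≤ log ((n / (m * q) + 1 : ℕ) : ℝ) := by
        gcongr
        calc (n : ℝ) / (c * m * B) ≤ n / (m * q) := by
              apply div_le_div_of_nonneg_left (Nat.cast_nonneg n) (by positivity)
              nlinarith
          _ ≤ ((n / (m * q) : ℕ) : ℝ) + 1 := by
              have := Nat.lt_floor_add_one ((n : ℝ) / ((m * q : ℕ) : ℝ))
              rw [Nat.floor_div_eq_div] at this
              push_cast at this
              exact this.le
          _ = ((n / (m * q) + 1 : ℕ) : ℝ) := by push_cast; ring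

section Growth

variable {b c : ℝ} {d : ℕ → ℕ}

lemma pos_of_pow_div_le (hb : 1 < b) (hc : 0 < c) (hd : ∀ i, b ^ (i + 1) / c ≤ d i) (i : ℕ) :
    0 < d i := by
  have : 0 < b ^ (i + 1) / c := by have := hb.trans' one_pos; positivity
  exact_mod_cast this.trans_le (hd i)

lemma lt_floor_log_div_log_of_le (hb : 1 < b) (hc : 0 < c) (hd : ∀ i, b ^ (i + 1) / c ≤ d i)
    {n : ℕ} (hn : 0 < n) {i : ℕ} (hi : d i ≤ n) : i < ⌊log (c * n) / log b⌋₊ := by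
  refine (lt_floor_log_div_log_iff hb (by positivity) i).2 ?_
  calc b ^ (i + 1) ≤ d i * c := (div_le_iff₀ hc).1 (hd i)
    _ ≤ c * n := by rw [mul_comm]; gcongr

lemma one_le_polyCountLE (hb : 1 < b) (hc : 0 < c) (hd : ∀ i, b ^ (i + 1) / c ≤ d i)
    {n : ℕ} (hn : 0 < n) : 1 ≤ polyCountLE d n := by
  simpa using prod_le_polyCountLE (pos_of_pow_div_le hb hc hd) _
    (fun i hi => mem_range.2 (lt_floor_log_div_log_of_le hb hc hd hn hi)) ∅ 0 (by simp)

lemma log_polyCountLE_le (hb : 1 < b) (hc : 0 < c) (hd : ∀ i, b ^ (i + 1) / c ≤ d i)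
    {n : ℕ} (hn : 0 < n) :
    log (polyCountLE d n) ≤ (log n + log (2 * c)) ^ 2 / (2 * log b) := by
  have hP : 0 < log b := log_pos hb
  set k := ⌊log (c * n) / log b⌋₊
  have hcount := polyCountLE_le_prod (pos_of_pow_div_le hb hc hd) (range k)
    (fun i hi => mem_range.2 (lt_floor_log_div_log_of_le hb hc hd hn hi))
  have hterm : ∀ i ∈ range k,
      log ((n / d i + 1 : ℕ) : ℝ) ≤ log (2 * c * n) - (i + 1) * log b := by
    intro i hi
    have hbpos : 0 < b ^ (i + 1) := pow_pos (hb.trans' one_pos) _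
    have hbi := (lt_floor_log_div_log_iff hb (by positivity) i).1 (mem_range.1 hi)
    simpa [log_pow] using log_natCast_div_add_one_le hc hbpos (hd i) hbi
  calc log (polyCountLE d n) ≤ log (∏ i ∈ range k, ((n / d i + 1 : ℕ) : ℝ)) := by
        gcongr
        · exact_mod_cast one_le_polyCountLE hb hc hd hn
        · exact_mod_cast hcount
    _ = ∑ i ∈ range k, log ((n / d i + 1 : ℕ) : ℝ) := log_prod fun i _ => by positivity
    _ ≤ ∑ i ∈ range k, (log (2 * c * n) - (i + 1) * log b) := sum_le_sum hterm
    _ = (log (2 * c * n) ^ 2 - (log (2 * c * n) - k * log b) ^ 2) / (2 * log b)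
          - k * log b / 2 := sum_range_sub_succ_mul _ _ hP.ne' k
    _ ≤ log (2 * c * n) ^ 2 / (2 * log b) := by
        have : 0 ≤ (k : ℝ) * log b / 2 := by positivity
        have : 0 ≤ (log (2 * c * n) - k * log b) ^ 2 / (2 * log b) := by positivity
        rw [sub_div]
        linarith
    _ = (log n + log (2 * c)) ^ 2 / (2 * log b) := by
        rw [log_mul (by positivity) (by positivity), add_comm]

lemma sum_le_log_polyCountLE (hb : 1 < b) (hc : 0 < c)
    (hd : ∀ i, b ^ (i + 1) / c ≤ d i ∧ d i ≤ c * b ^ (i + 1)) {n : ℕ} (hn : 0 < n) (m : ℕ) :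
    ∑ i ∈ range m, (log n - (i + 1) * log b - log (c * m)) ≤ log (polyCountLE d n) := by
  have hpos := pos_of_pow_div_le hb hc fun i => (hd i).1
  have hbudget : ∑ i ∈ range m, n / (m * d i) * d i ≤ n :=
    calc ∑ i ∈ range m, n / (m * d i) * d i ≤ ∑ _i ∈ range m, n / m := by
          gcongr with i
          rw [← Nat.div_div_eq_div_mul]
          exact Nat.div_mul_le_self _ _
      _ ≤ n := by simpa using Nat.mul_div_le n m
  have hcount := prod_le_polyCountLE hpos _
    (fun i hi => mem_range.2 (lt_floor_log_div_log_of_le hb hc (fun i => (hd i).1) hn hi))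
    _ _ hbudget
  have hterm : ∀ i ∈ range m,
      log n - (i + 1) * log b - log (c * m) ≤ log ((n / (m * d i) + 1 : ℕ) : ℝ) := by
    intro i hi
    have hbpos : 0 < b ^ (i + 1) := pow_pos (hb.trans' one_pos) _
    simpa [log_pow] using
      sub_log_le_log_natCast_div_add_one hc hbpos hn (mem_range.1 hi).pos (hpos i) (hd i).2
  calc ∑ i ∈ range m, (log n - (i + 1) * log b - log (c * m))
      ≤ ∑ i ∈ range m, log ((n / (m * d i) + 1 : ℕ) : ℝ) := sum_le_sum hterm
    _ = log (∏ i ∈ range m, ((n / (m * d i) + 1 : ℕ) : ℝ)) :=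
        (log_prod fun i _ => by positivity).symm
    _ ≤ log (polyCountLE d n) := by
        gcongr
        exact_mod_cast hcount

lemma sq_log_sub_log_polyCountLE_le (hb : 1 < b) (hc : 1 ≤ c)
    (hd : ∀ i, b ^ (i + 1) / c ≤ d i ∧ d i ≤ c * b ^ (i + 1)) {n : ℕ} (hn : 0 < n) :
    (log n) ^ 2 / (2 * log b) - log (polyCountLE d n) ≤
      (1 / 2 + |log (c / log b)| / log b) * log n + log b / 2
        + 1 / log b * max 0 (log (log n) * log n) := by
  set L := log n
  set P := log b
  have hP : 0 < P := log_pos hb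
  have hL : 0 ≤ L := log_nonneg (by exact_mod_cast hn)
  set m := ⌊L / P⌋₊
  have hmL : (m : ℝ) * P ≤ L := (le_div_iff₀ hP).1 (Nat.floor_le (by positivity))
  have hLm : L < (m + 1) * P := (div_lt_iff₀ hP).1 (Nat.lt_floor_add_one _)
  have hsum := sum_le_log_polyCountLE hb (by linarith) hd hn m
  rw [sum_sub_distrib, sum_const, card_range, nsmul_eq_mul,
    sum_range_sub_succ_mul _ _ hP.ne'] at hsum
  have hgap : (L - m * P) ^ 2 / (2 * P) ≤ P / 2 := by
    rw [div_le_iff₀ (by positivity)]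
    nlinarith
  have hmlog := floor_mul_log_mul_floor_le hL hP hc
  have hsplit : (max 0 (log L * L) + |log (c / P)| * L) / P
      = |log (c / P)| / P * L + 1 / P * max 0 (log L * L) := by ring
  rw [sub_div] at hsum
  linarith

lemma abs_log_polyCountLE_sub_le (hb : 1 < b) (hc : 1 ≤ c)
    (hd : ∀ i, b ^ (i + 1) / c ≤ d i ∧ d i ≤ c * b ^ (i + 1)) {n : ℕ} (hn : 0 < n) :
    |log (polyCountLE d n) - (log n) ^ 2 / (2 * log b)| ≤
      (1 / 2 + |log (c / log b)| / log b + log (2 * c) / log b) * log n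
        + (log b / 2 + log (2 * c) ^ 2 / (2 * log b))
        + 1 / log b * max 0 (log (log n) * log n) := by
  have hP : 0 < log b := log_pos hb
  have hL : 0 ≤ log n := log_nonneg (by exact_mod_cast hn)
  have hg : 0 ≤ log (2 * c) := log_nonneg (by linarith)
  have hup := log_polyCountLE_le hb (by linarith) (fun i => (hd i).1) hn
  have hlow := sq_log_sub_log_polyCountLE_le hb hc hd hn
  have hexpand : (log n + log (2 * c)) ^ 2 / (2 * log b)
      = log n ^ 2 / (2 * log b) + log (2 * c) / log b * log n
        + log (2 * c) ^ 2 / (2 * log b) := by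
    field_simp
    ring
  have : 0 ≤ log (2 * c) / log b * log n := by positivity
  have : 0 ≤ |log (c / log b)| / log b * log n := by positivity
  have : 0 ≤ 1 / log b * max 0 (log (log n) * log n) := by positivity
  have : 0 ≤ log (2 * c) ^ 2 / (2 * log b) := by positivity
  rw [abs_sub_le_iff]
  constructor <;> linarith

end Growth

theorem stmt5_general (p : ℕ) (hp : p.Prime) (c : ℝ) (hc : 1 ≤ c) (d : ℕ → ℕ)
    (hd : ∀ i : ℕ, ((p : ℝ) ^ (i + 1)) / c ≤ (d i : ℝ) ∧ (d i : ℝ) ≤ c * (p : ℝ) ^ (i + 1)) :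
    ∃ C : ℝ, ∀ n : ℕ, 2 ≤ n →
      |Real.log (polyCountLE d n) - (Real.log n) ^ 2 / (2 * Real.log p)| ≤
        C * max 1 (Real.log (Real.log n) * Real.log n) := by
  have hb : (1 : ℝ) < p := by exact_mod_cast hp.one_lt
  have hP : 0 < log p := log_pos hb
  refine ⟨3 * (1 / 2 + |log (c / log p)| / log p + log (2 * c) / log p)
      + (log p / 2 + log (2 * c) ^ 2 / (2 * log p)) + 1 / log p, fun n hn => ?_⟩
  have hg : 0 ≤ log (2 * c) := log_nonneg (by linarith)
  exact (abs_log_polyCountLE_sub_le hb hc hd (by omega)).trans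
    (affine_le_mul_max_one_log_mul (log_nonneg (by exact_mod_cast (by omega : 1 ≤ n)))
      (by positivity) (by positivity) (by positivity))

/-- If the generator `x_i` (for `i ≥ 1`) has degree in `[p^i/c, c·p^i]`, then
`log (dim R_{≤n}) = (1/(2 log p)) (log n)^2 + O(log log n · log n)`. -/
theorem stmt5 (p : ℕ) (hp : p.Prime) (c : ℝ) (hc : 1 ≤ c) (d : ℕ → ℕ)
    (hpos : ∀ i, 1 ≤ d i)
    (hd : ∀ i : ℕ, ((p : ℝ) ^ (i + 1)) / c ≤ (d i : ℝ) ∧ (d i : ℝ) ≤ c * (p : ℝ) ^ (i + 1)) :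
    ∃ C : ℝ, ∀ n : ℕ, 2 ≤ n →
      |Real.log (polyCountLE d n) - (Real.log n) ^ 2 / (2 * Real.log p)| ≤
        C * max 1 (Real.log (Real.log n) * Real.log n) :=
  stmt5_general p hp c hc d hd
end

section
/- Fix a prime p. Let R be the graded polynomial algebra over a field with exactly i generators in degree p^i for each i ≥ 1. Then log(dim R_{≤n}) = (1/(6 (log p)^2)) (log n)^3 + O(log log n · (log n)^2). -/
/-!
Put `L = ⌊log_p n⌋`. A monomial of degree at most `n` only involves the `i` generators of degree
`p ^ i` with `i ≤ L`, each to an exponent at most `n / p ^ i`; conversely, as at most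
`(L + 1) ^ 2` generators are in play, any choice of exponents at most `n / ((L + 1) ^ 2 p ^ i)`
gives a monomial of degree at most `n`. So `log dim R_{≤n}` is `∑_{i ≤ L} i (log n - i log p)`
up to `O(L ^ 2 log L)`, and by the closed forms of `∑ i` and `∑ i ^ 2` this sum is
`(log n) ^ 3 / (6 (log p) ^ 2) + O(log n)`.
-/

/-- The number of monomials of total degree at most `n` in a graded polynomial algebra
with exactly `i` generators in degree `p^i` for each `i ≥ 1`: generators are indexed by
pairs `(i, j)` with `j < i`, the generator `(i, j)` having degree `p^i`. -/
noncomputable def polyCountMay (p n : ℕ) : ℕ :=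
  Nat.card {a : ℕ × ℕ →₀ ℕ //
    (∀ q ∈ a.support, q.2 < q.1) ∧ (a.sum fun q m => m * p ^ q.1) ≤ n}

open Finset Real

abbrev BoundedMonomial (p n : ℕ) : Type :=
  {a : ℕ × ℕ →₀ ℕ // (∀ q ∈ a.support, q.2 < q.1) ∧ (a.sum fun q m => m * p ^ q.1) ≤ n}

/-- Exponents of the generators `(i, j)` with `j < i ≤ L`, that of `(i, j)` being below `c i`. -/
abbrev ExponentBox (L : ℕ) (c : ℕ → ℕ) : Type :=
  ∀ i : Fin (L + 1), Fin i → Fin (c i)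

lemma card_exponentBox (L : ℕ) (c : ℕ → ℕ) :
    Nat.card (ExponentBox L c) = ∏ i ∈ range (L + 1), c i ^ i := by
  simp [Nat.card_eq_fintype_card, Fintype.card_pi,
    Fin.prod_univ_eq_prod_range (fun i => c i ^ i)]

namespace BoundedMonomial

variable {p n : ℕ}

lemma apply_mul_pow_le (a : BoundedMonomial p n) (q : ℕ × ℕ) : a.1 q * p ^ q.1 ≤ n := by
  by_cases hq : q ∈ a.1.support
  · exact (single_le_sum (f := fun q => a.1 q * p ^ q.1) (fun _ _ => Nat.zero_le _) hq).trans a.2.2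
  · simp [Finsupp.notMem_support_iff.1 hq]

lemma apply_eq_zero (hp : 1 < p) (a : BoundedMonomial p n) {q : ℕ × ℕ}
    (hq : ¬(q.2 < q.1 ∧ q.1 ≤ Nat.log p n)) : a.1 q = 0 := by
  by_contra h
  refine hq ⟨a.2.1 q (Finsupp.mem_support_iff.2 h), Nat.le_log_of_pow_le hp ?_⟩
  exact (Nat.le_mul_of_pos_left _ (Nat.pos_of_ne_zero h)).trans (apply_mul_pow_le a q)

def toExponentBox (hp : 0 < p) (a : BoundedMonomial p n) :
    ExponentBox (Nat.log p n) (fun i => n / p ^ i + 1) :=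
  fun i j => ⟨a.1 (i, j), Nat.lt_succ_of_le <|
    (Nat.le_div_iff_mul_le (Nat.pow_pos hp)).2 (apply_mul_pow_le a _)⟩

lemma toExponentBox_injective (hp : 1 < p) :
    Function.Injective (toExponentBox (n := n) (zero_lt_one.trans hp)) := by
  intro a b hab
  ext q
  by_cases hq : q.2 < q.1 ∧ q.1 ≤ Nat.log p n
  · have := congrFun (congrFun hab ⟨q.1, Nat.lt_succ_of_le hq.2⟩) ⟨q.2, hq.1⟩
    exact congrArg Fin.val this
  · rw [apply_eq_zero hp a hq, apply_eq_zero hp b hq]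

lemma finite (hp : 1 < p) : Finite (BoundedMonomial p n) :=
  Finite.of_injective _ (toExponentBox_injective hp)

end BoundedMonomial

lemma polyCountMay_le_prod {p : ℕ} (hp : 1 < p) (n : ℕ) :
    polyCountMay p n ≤ ∏ i ∈ range (Nat.log p n + 1), (n / p ^ i + 1) ^ i := by
  rw [← card_exponentBox]
  exact Nat.card_le_card_of_injective _ (BoundedMonomial.toExponentBox_injective hp)

namespace ExponentBox

variable {L : ℕ} {c : ℕ → ℕ}

noncomputable def toFinsupp (f : ExponentBox L c) : ℕ × ℕ →₀ ℕ :=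
  Finsupp.onFinset (range (L + 1) ×ˢ range (L + 1))
    (fun q => if h : q.1 < L + 1 ∧ q.2 < q.1 then (f ⟨q.1, h.1⟩ ⟨q.2, h.2⟩ : ℕ) else 0)
    (fun q hq => by
      obtain ⟨h, -⟩ := dite_ne_right_iff.1 hq
      simp only [mem_product, mem_range]
      omega)

lemma toFinsupp_apply (f : ExponentBox L c) (q : ℕ × ℕ) :
    f.toFinsupp q =
      if h : q.1 < L + 1 ∧ q.2 < q.1 then (f ⟨q.1, h.1⟩ ⟨q.2, h.2⟩ : ℕ) else 0 :=
  rfl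

lemma toFinsupp_injective : Function.Injective (toFinsupp (L := L) (c := c)) := by
  intro f g hfg
  funext i j
  have := DFunLike.congr_fun hfg (i.val, j.val)
  rw [toFinsupp_apply, toFinsupp_apply, dif_pos ⟨i.isLt, j.isLt⟩, dif_pos ⟨i.isLt, j.isLt⟩]
    at this
  exact Fin.ext this

lemma lt_of_mem_support_toFinsupp (f : ExponentBox L c) {q : ℕ × ℕ}
    (hq : q ∈ f.toFinsupp.support) : q.2 < q.1 :=
  (dite_ne_right_iff.1 (Finsupp.mem_support_iff.1 hq)).1.2

lemma sum_toFinsupp_le (p n : ℕ) {K : ℕ} (hK : (L + 1) ^ 2 ≤ K)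
    (f : ExponentBox L (fun i => n / (K * p ^ i) + 1)) :
    (f.toFinsupp.sum fun q m => m * p ^ q.1) ≤ n := by
  have hterm : ∀ q ∈ range (L + 1) ×ˢ range (L + 1), f.toFinsupp q * p ^ q.1 ≤ n / K := by
    intro q _
    rw [toFinsupp_apply]
    split_ifs
    · calc _ ≤ n / (K * p ^ q.1) * p ^ q.1 :=
            Nat.mul_le_mul_right _ (Nat.lt_succ_iff.1 (f _ _).isLt)
        _ ≤ n / K := by rw [← Nat.div_div_eq_div_mul]; exact Nat.div_mul_le_self _ _
    · simp
  calc (f.toFinsupp.sum fun q m => m * p ^ q.1)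
      = ∑ q ∈ range (L + 1) ×ˢ range (L + 1), f.toFinsupp q * p ^ q.1 :=
        Finsupp.onFinset_sum _ fun _ => zero_mul _
    _ ≤ (L + 1) ^ 2 * (n / K) := by
        simpa [sq] using Finset.sum_le_card_nsmul _ _ _ hterm
    _ ≤ K * (n / K) := Nat.mul_le_mul_right _ hK
    _ ≤ n := Nat.mul_div_le n K

end ExponentBox

lemma prod_le_polyCountMay {p : ℕ} (hp : 1 < p) (n : ℕ) :
    ∏ i ∈ range (Nat.log p n + 1), (n / ((Nat.log p n + 1) ^ 2 * p ^ i) + 1) ^ i ≤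
      polyCountMay p n := by
  have := BoundedMonomial.finite (n := n) hp
  rw [← card_exponentBox]
  refine Nat.card_le_card_of_injective (fun f => (⟨f.toFinsupp,
      fun _ => f.lt_of_mem_support_toFinsupp, f.sum_toFinsupp_le p n le_rfl⟩ : BoundedMonomial p n))
    fun f g hfg => ExponentBox.toFinsupp_injective (congrArg Subtype.val hfg)

lemma sum_range_add_one_natCast (L : ℕ) : ∑ i ∈ range (L + 1), (i : ℝ) = L * (L + 1) / 2 := by
  induction L with
  | zero => simp
  | succ L ih => rw [sum_range_succ, ih]; push_cast; ring

lemma sum_range_add_one_natCast_sq (L : ℕ) :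
    ∑ i ∈ range (L + 1), (i : ℝ) ^ 2 = L * (L + 1) * (2 * L + 1) / 6 := by
  induction L with
  | zero => simp
  | succ L ih => rw [sum_range_succ, ih]; push_cast; ring

lemma abs_sum_mul_sub_sub_cube_le (L : ℕ) {u : ℝ} (h1 : L ≤ u) (h2 : u ≤ L + 1) :
    |∑ i ∈ range (L + 1), (i : ℝ) * (u - i) - u ^ 3 / 6| ≤ 2 * u := by
  have hsum : ∑ i ∈ range (L + 1), (i : ℝ) * (u - i) =
      u * (L * (L + 1) / 2) - L * (L + 1) * (2 * L + 1) / 6 := by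
    simp only [mul_sub, sum_sub_distrib, ← sq, mul_comm _ u, ← mul_sum, sum_range_add_one_natCast,
      sum_range_add_one_natCast_sq]
  rw [hsum, abs_le]
  rcases Nat.eq_zero_or_pos L with rfl | hL1
  · norm_num at h1 h2 ⊢
    constructor <;> nlinarith [pow_nonneg h1 3, mul_nonneg (mul_nonneg h1 (sub_nonneg.2 h2)) h1]
  · have hL1 : (1 : ℝ) ≤ L := Nat.one_le_cast.2 hL1
    constructor <;> nlinarith [mul_nonneg (sub_nonneg.2 h1) (sub_nonneg.2 h2),
      sq_nonneg (u - L), sq_nonneg (u - L - 1), mul_nonneg (sub_nonneg.2 hL1) (sub_nonneg.2 h1)]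

lemma abs_sum_mul_sub_mul_sub_cube_le (L : ℕ) {t x : ℝ} (ht : 0 < t) (h1 : L * t ≤ x)
    (h2 : x ≤ (L + 1) * t) :
    |∑ i ∈ range (L + 1), (i : ℝ) * (x - i * t) - x ^ 3 / (6 * t ^ 2)| ≤ 2 * x := by
  have hu := abs_sum_mul_sub_sub_cube_le L (u := x / t) ((le_div_iff₀ ht).2 h1)
    ((div_le_iff₀ ht).2 h2)
  have hscale : ∑ i ∈ range (L + 1), (i : ℝ) * (x - i * t) - x ^ 3 / (6 * t ^ 2) =
      t * (∑ i ∈ range (L + 1), (i : ℝ) * (x / t - i) - (x / t) ^ 3 / 6) := by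
    rw [mul_sub, mul_sum]
    congr 1
    · exact sum_congr rfl fun i _ => by field_simp
    · field_simp
  rw [hscale, abs_mul, abs_of_pos ht]
  calc _ ≤ t * (2 * (x / t)) := mul_le_mul_of_nonneg_left hu ht.le
    _ = 2 * x := by field_simp

lemma log_natCast_div_add_one_le_s6 {n d : ℕ} (hd : 0 < d) (h : d ≤ n) :
    log ((n / d + 1 : ℕ) : ℝ) ≤ log 2 + log n - log d := by
  have hle : ((n / d + 1 : ℕ) : ℝ) ≤ 2 * (n / d : ℝ) := by
    have h1 : 1 ≤ n / d := (Nat.one_le_div_iff hd).2 h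
    calc ((n / d + 1 : ℕ) : ℝ) ≤ 2 * ((n / d : ℕ) : ℝ) := by
          exact_mod_cast (by omega : n / d + 1 ≤ 2 * (n / d))
      _ ≤ 2 * (n / d : ℝ) := by gcongr; exact Nat.cast_div_le
  calc log ((n / d + 1 : ℕ) : ℝ) ≤ log (2 * (n / d : ℝ)) := log_le_log (by positivity) hle
    _ = log 2 + log n - log d := by
      have hn : (n : ℝ) ≠ 0 := by exact_mod_cast (by omega : n ≠ 0)
      rw [log_mul (by norm_num) (div_ne_zero hn (by positivity)), log_div hn (by positivity)]
      ring

lemma log_sub_log_le_log_natCast_div_add_one (n : ℕ) {d : ℕ} (hd : 0 < d) :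
    log n - log d ≤ log ((n / d + 1 : ℕ) : ℝ) := by
  rcases Nat.eq_zero_or_pos n with rfl | hn
  · simpa using log_natCast_nonneg d
  rw [← log_div (by positivity) (by positivity)]
  refine log_le_log (by positivity) ?_
  rw [div_le_iff₀ (by positivity)]
  exact_mod_cast (Nat.lt_div_mul_add hd).le.trans_eq (by ring)

lemma log_natCast_prod_pow (s : Finset ℕ) (f : ℕ → ℕ) :
    log ((∏ i ∈ s, (f i + 1) ^ i : ℕ) : ℝ) = ∑ i ∈ s, i * log ((f i + 1 : ℕ) : ℝ) := by
  push_cast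
  rw [log_prod fun i _ => by positivity]
  exact sum_congr rfl fun i _ => log_pow _ _

lemma natLog_mul_log_le {p : ℕ} (hp : 1 < p) {n : ℕ} (hn : n ≠ 0) :
    (Nat.log p n : ℝ) * log p ≤ log n := by
  rw [← log_pow]
  exact log_le_log (by positivity) (by exact_mod_cast Nat.pow_log_le_self p hn)

lemma log_le_natLog_add_one_mul {p : ℕ} (hp : 1 < p) {n : ℕ} (hn : n ≠ 0) :
    log n ≤ (Nat.log p n + 1) * log p := by
  rw [← Nat.cast_succ, ← log_pow]
  exact log_le_log (by positivity) (by exact_mod_cast (Nat.lt_pow_succ_log_self hp n).le)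

lemma polyCountMay_pos {p : ℕ} (hp : 1 < p) (n : ℕ) : 0 < polyCountMay p n :=
  (prod_pos fun i _ => pow_pos (Nat.succ_pos _) i).trans_le (prod_le_polyCountMay hp n)

lemma log_polyCountMay_le {p : ℕ} (hp : 1 < p) {n : ℕ} (hn : n ≠ 0) :
    log (polyCountMay p n) ≤
      ∑ i ∈ range (Nat.log p n + 1), (i : ℝ) * (log 2 + (log n - i * log p)) := by
  calc log (polyCountMay p n)
      ≤ log ((∏ i ∈ range (Nat.log p n + 1), (n / p ^ i + 1) ^ i : ℕ) : ℝ) :=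
        log_le_log (by exact_mod_cast polyCountMay_pos hp n)
          (by exact_mod_cast polyCountMay_le_prod hp n)
    _ ≤ _ := by
      rw [log_natCast_prod_pow]
      refine sum_le_sum fun i hi => mul_le_mul_of_nonneg_left ?_ (Nat.cast_nonneg i)
      have hpi : p ^ i ≤ n :=
        (Nat.pow_le_pow_right (by omega) (Nat.lt_succ_iff.1 (mem_range.1 hi))).trans
          (Nat.pow_log_le_self p hn)
      have := log_natCast_div_add_one_le_s6 (by positivity) hpi
      rw [Nat.cast_pow, log_pow] at this
      linarith

lemma le_log_polyCountMay {p : ℕ} (hp : 1 < p) (n : ℕ) :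
    ∑ i ∈ range (Nat.log p n + 1), (i : ℝ) * (-(2 * log (Nat.log p n + 1)) + (log n - i * log p))
      ≤ log (polyCountMay p n) := by
  set L := Nat.log p n
  calc _ ≤ log ((∏ i ∈ range (L + 1), (n / ((L + 1) ^ 2 * p ^ i) + 1) ^ i : ℕ) : ℝ) := by
        rw [log_natCast_prod_pow]
        refine sum_le_sum fun i _ => mul_le_mul_of_nonneg_left ?_ (Nat.cast_nonneg i)
        have := log_sub_log_le_log_natCast_div_add_one n (d := (L + 1) ^ 2 * p ^ i) (by positivity)
        rw [Nat.cast_mul, Nat.cast_pow, Nat.cast_pow, log_mul (by positivity) (by positivity),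
          log_pow, log_pow] at this
        push_cast at this ⊢
        linarith
    _ ≤ log (polyCountMay p n) :=
        log_le_log (by exact_mod_cast (prod_pos fun _ _ => by positivity))
          (by exact_mod_cast prod_le_polyCountMay hp n)

lemma sum_range_natCast_mul_add (L : ℕ) (a : ℝ) (g : ℕ → ℝ) :
    ∑ i ∈ range (L + 1), (i : ℝ) * (a + g i) =
      a * (L * (L + 1) / 2) + ∑ i ∈ range (L + 1), (i : ℝ) * g i := by
  simp only [mul_add, sum_add_distrib, ← sum_mul, sum_range_add_one_natCast, mul_comm a]

lemma abs_log_polyCountMay_sub_le {p : ℕ} (hp : 1 < p) {n : ℕ} (hn : n ≠ 0) :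
    |log (polyCountMay p n) - log n ^ 3 / (6 * log p ^ 2)| ≤
      2 * log n + (log 2 + 2 * log (Nat.log p n + 1)) * (Nat.log p n + 1) ^ 2 := by
  set L := Nat.log p n
  have hmain := abs_le.1 <| abs_sum_mul_sub_mul_sub_cube_le L (log_pos (by exact_mod_cast hp))
    (natLog_mul_log_le hp hn) (log_le_natLog_add_one_mul hp hn)
  have hup := log_polyCountMay_le hp hn
  have hlow := le_log_polyCountMay hp n
  rw [sum_range_natCast_mul_add] at hup hlow
  have hL : (0 : ℝ) ≤ L := Nat.cast_nonneg L
  have hσ0 : (0 : ℝ) ≤ L * (L + 1) / 2 := by positivity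
  have hσ : L * (L + 1) / 2 ≤ ((L : ℝ) + 1) ^ 2 := by nlinarith
  have hlogL : 0 ≤ log ((L : ℝ) + 1) := log_nonneg (by linarith)
  have hlog2 : 0 ≤ log (2 : ℝ) := log_nonneg (by norm_num)
  rw [abs_le]
  constructor <;> nlinarith [mul_le_mul_of_nonneg_left hσ hlogL,
    mul_le_mul_of_nonneg_left hσ hlog2, mul_nonneg hlogL hσ0, mul_nonneg hlog2 hσ0]

lemma add_log_mul_sq_le {x M : ℝ} (hx : 1 / 2 ≤ x) (hM : 1 ≤ M) (hMx : M ≤ 4 * x) :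
    2 * x + (log 2 + 2 * log M) * M ^ 2 ≤ 2000 * max 1 (log x * x ^ 2) := by
  have hlog2 := log_two_lt_d9
  have hlog4x : log M ≤ 2 * log 2 + log x := by
    calc log M ≤ log (2 ^ 2 * x) := log_le_log (by linarith) (by linarith)
      _ = 2 * log 2 + log x := by rw [log_mul (by norm_num) (by linarith), log_pow]; norm_num
  have hM2 : M ^ 2 ≤ 16 * x ^ 2 := by nlinarith
  have herr : (log 2 + 2 * log M) * M ^ 2 ≤ (5 * log 2 + 2 * log x) * (16 * x ^ 2) :=
    mul_le_mul (by linarith) hM2 (by positivity)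
      (by linarith [log_nonneg hM, log_nonneg (by norm_num : (1 : ℝ) ≤ 2)])
  rcases le_or_gt x 3 with hx3 | hx3
  · have hlogx : log x ≤ 2 := by linarith [log_le_sub_one_of_pos (by linarith : 0 < x)]
    have : (5 * log 2 + 2 * log x) * (16 * x ^ 2) ≤ 8 * (16 * 9) :=
      mul_le_mul (by linarith) (by nlinarith) (by positivity) (by norm_num)
    linarith [le_max_left 1 (log x * x ^ 2)]
  · have hlogx : 1 ≤ log x := by
      rw [le_log_iff_exp_le (by linarith)]
      linarith [exp_one_lt_d9]
    have : 2 * x + (5 * log 2 + 2 * log x) * (16 * x ^ 2) ≤ 90 * (log x * x ^ 2) := by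
      nlinarith
    linarith [le_max_right 1 (log x * x ^ 2),
      mul_nonneg (by linarith : (0 : ℝ) ≤ log x) (sq_nonneg x)]

/-- `log (dim R_{≤n}) = (1/(6 (log p)^2)) (log n)^3 + O(log log n · (log n)^2)`. -/
theorem stmt6 (p : ℕ) (hp : p.Prime) : ∃ C : ℝ, ∀ n : ℕ, 2 ≤ n →
    |Real.log (polyCountMay p n) - (Real.log n) ^ 3 / (6 * (Real.log p) ^ 2)| ≤
      C * max 1 (Real.log (Real.log n) * (Real.log n) ^ 2) := by
  refine ⟨2000, fun n hn => ?_⟩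
  have hn0 : n ≠ 0 := by omega
  have hlog2 : 1 / 2 < log 2 := by linarith [log_two_gt_d9]
  have hx : log 2 ≤ log n := log_le_log (by norm_num) (by exact_mod_cast hn)
  have hLx : (Nat.log p n : ℝ) ≤ 2 * log n := by
    have ht : log 2 ≤ log p := log_le_log (by norm_num) (by exact_mod_cast hp.two_le)
    nlinarith [natLog_mul_log_le hp.one_lt hn0, (Nat.cast_nonneg (Nat.log p n) : (0 : ℝ) ≤ _)]
  refine (abs_log_polyCountMay_sub_le hp.one_lt hn0).trans (add_log_mul_sq_le ?_ ?_ ?_)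
  · linarith
  · linarith [(Nat.cast_nonneg (Nat.log p n) : (0 : ℝ) ≤ _)]
  · linarith
end

section
/- Fix a prime p. For h ≥ 1, let R^h be the graded polynomial algebra with min(h, n−h+1) generators in degree p^n for each n (so generators occur in degrees p^h through p^{2h−1} and beyond, corresponding to a tensor product of algebras S^h ⊗ ... ⊗ S^{2h−1}, where S^k has one generator in each degree p^n for n ≥ k). Then log( max over h of dim R^h_{≤n} ) = ((9 + 4√2)/(294 (log p)^2)) (log n)^3 + O(log log n · (log n)^2). -/
/-!
Write `L = ⌊log_p n⌋`. Only the generators `(k, t)` of `R^h` with `t ≤ L` can occur in a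
monomial of degree `≤ n`; call them slots, and let `N ≤ (L + 1)²` be their number. Bounding every
exponent by `n / p^t < p^(L+1-t)` from above, and from below allowing every exponent up to
`n / (N p^t) ≥ p^(L-t) / N`, gives `log dim R^h_{≤n} = log p · ∑_slots (L - t) + O(L² log L)`.
The slot sum is `∑_{h ≤ k < 2h} (L-k)(L-k+1)/2`, which telescopes against
`((L-h)³ - (L-2h)³)/6` up to `O(L²)`, and the identity
  `(9 + 4√2) M³ - 49 ((M-h)³ - (M-2h)³) = (7h - (3-√2) M)² ((3+2√2) M - 7h)`
shows that this cubic in `h` is at most `(9 + 4√2) M³ / 294` for `2h ≤ M`, with equality up to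
`O(M)` at the integer `h = ⌈(3-√2) M / 7⌉`. Finally `L = log n / log p + O(1)`.
-/

/-- The number of monomials of total degree at most `n` in
`R^h = S^h ⊗ S^{h+1} ⊗ ... ⊗ S^{2h-1}`, where `S^k` is the polynomial algebra with one
generator in each degree `p^t` for `t ≥ k`.  Generators are indexed by pairs `(k, t)`
with `h ≤ k ≤ 2h - 1` and `k ≤ t`, the generator `(k, t)` having degree `p^t`. -/
noncomputable def polyCountMRS (p h n : ℕ) : ℕ :=
  Nat.card {a : ℕ × ℕ →₀ ℕ //
    (∀ q ∈ a.support, h ≤ q.1 ∧ q.1 ≤ 2 * h - 1 ∧ q.1 ≤ q.2) ∧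
    (a.sum fun q m => m * p ^ q.2) ≤ n}

open Finset Real

abbrev BoundedMonomials {ι : Type*} (A : Set ι) (w : ι → ℕ) (n : ℕ) : Type _ :=
  {a : ι →₀ ℕ // (∀ q ∈ a.support, q ∈ A) ∧ (a.sum fun q m => m * w q) ≤ n}

namespace BoundedMonomials

variable {ι : Type*} {A : Set ι} {w : ι → ℕ} {n : ℕ} {S : Finset ι}

lemma coeff_mul_le (a : BoundedMonomials A w n) (q : ι) : a.1 q * w q ≤ n := by
  refine le_trans ?_ a.2.2
  by_cases hq : q ∈ a.1.support
  · exact single_le_sum (f := fun q => a.1 q * w q) (fun _ _ => Nat.zero_le _) hq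
  · simp [Finsupp.notMem_support_iff.mp hq]

def restrict (hw : ∀ q ∈ S, 0 < w q) (a : BoundedMonomials A w n) :
    (q : S) → Fin (n / w q + 1) :=
  fun q => ⟨a.1 q, Nat.lt_succ_of_le ((Nat.le_div_iff_mul_le (hw q q.2)).2 (a.coeff_mul_le q))⟩

lemma restrict_injective (hw : ∀ q ∈ S, 0 < w q) (hS : ∀ q ∈ A, w q ≤ n → q ∈ S) :
    Function.Injective (restrict (A := A) (n := n) hw) := by
  have coeff_eq_zero (a : BoundedMonomials A w n) (q : ι) (hq : q ∉ S) : a.1 q = 0 := by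
    by_contra hne
    exact hq (hS q (a.2.1 q (Finsupp.mem_support_iff.2 hne))
      ((Nat.le_mul_of_pos_left _ (Nat.pos_of_ne_zero hne)).trans (a.coeff_mul_le q)))
  intro a b hab
  ext q
  by_cases hq : q ∈ S
  · exact congrArg Fin.val (congrFun hab ⟨q, hq⟩)
  · rw [coeff_eq_zero a q hq, coeff_eq_zero b q hq]

lemma finite (hw : ∀ q ∈ S, 0 < w q) (hS : ∀ q ∈ A, w q ≤ n → q ∈ S) :
    Finite (BoundedMonomials A w n) :=
  Finite.of_injective _ (restrict_injective hw hS)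

lemma card_le_prod (hw : ∀ q ∈ S, 0 < w q) (hS : ∀ q ∈ A, w q ≤ n → q ∈ S) :
    Nat.card (BoundedMonomials A w n) ≤ ∏ q ∈ S, (n / w q + 1) := by
  classical
  calc Nat.card (BoundedMonomials A w n) ≤ Nat.card ((q : S) → Fin (n / w q + 1)) :=
        Nat.card_le_card_of_injective _ (restrict_injective hw hS)
    _ = ∏ q ∈ S, (n / w q + 1) := by
        rw [Nat.card_pi, ← prod_coe_sort S]
        simp only [Nat.card_eq_fintype_card, Fintype.card_fin]

lemma prod_le_card [Finite (BoundedMonomials A w n)] (hSA : ∀ q ∈ S, q ∈ A) (b : ι → ℕ)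
    (hb : ∑ q ∈ S, b q * w q ≤ n) :
    ∏ q ∈ S, (b q + 1) ≤ Nat.card (BoundedMonomials A w n) := by
  classical
  let extend (g : (q : S) → Fin (b q + 1)) : ι →₀ ℕ :=
    Finsupp.onFinset S (fun q => if hq : q ∈ S then g ⟨q, hq⟩ else 0)
      (fun q hq => by by_contra hqS; simp [hqS] at hq)
  have extend_apply (g : (q : S) → Fin (b q + 1)) (q : S) : extend g q = g q := by
    simp [extend]
  have mem (g) :
      (∀ q ∈ (extend g).support, q ∈ A) ∧ ((extend g).sum fun q m => m * w q) ≤ n := by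
    refine ⟨fun q hq => hSA q (Finsupp.support_onFinset_subset hq), ?_⟩
    rw [Finsupp.onFinset_sum _ (fun _ => zero_mul _)]
    refine le_trans (sum_le_sum fun q hq => ?_) hb
    simp only [dif_pos hq]
    exact Nat.mul_le_mul_right _ (Nat.lt_succ_iff.1 (g ⟨q, hq⟩).2)
  calc ∏ q ∈ S, (b q + 1) = Nat.card ((q : S) → Fin (b q + 1)) := by
        rw [Nat.card_pi, ← prod_coe_sort S]
        simp only [Nat.card_eq_fintype_card, Fintype.card_fin]
    _ ≤ Nat.card (BoundedMonomials A w n) :=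
        Nat.card_le_card_of_injective (fun g => ⟨extend g, mem g⟩) fun g₁ g₂ hg =>
          funext fun q => Fin.ext <| by
            rw [← extend_apply g₁, ← extend_apply g₂]
            exact congrArg (fun a : BoundedMonomials A w n => a.1 q) hg

end BoundedMonomials

lemma sum_Ico_sub_succ {M : Type*} [AddCommGroup M] (F : ℕ → M) {a b : ℕ} (hab : a ≤ b) :
    ∑ k ∈ Ico a b, (F k - F (k + 1)) = F a - F b := by
  rw [← neg_sub, ← sum_Ico_sub F hab, ← sum_neg_distrib]
  simp only [neg_sub]

lemma sum_Ico_sub_natCast (x : ℝ) {k m : ℕ} (hkm : k ≤ m) :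
    ∑ t ∈ Ico k m, (x - t) = ((x - k + 1) * (x - k) - (x - m + 1) * (x - m)) / 2 := by
  rw [sub_div, ← sum_Ico_sub_succ (fun t : ℕ => (x - t + 1) * (x - t) / 2) hkm]
  exact sum_congr rfl fun t _ => by push_cast; ring

lemma sqrt_two_bounds : 1.4 ≤ √2 ∧ √2 ≤ 1.5 := by
  have := sq_sqrt (show (0 : ℝ) ≤ 2 by norm_num)
  constructor <;> nlinarith [sqrt_nonneg 2]

lemma cube_sub_cube_identity (h M : ℝ) :
    (9 + 4 * √2) * M ^ 3 - 49 * ((M - h) ^ 3 - (M - 2 * h) ^ 3) =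
      (7 * h - (3 - √2) * M) ^ 2 * ((3 + 2 * √2) * M - 7 * h) := by
  have := sq_sqrt (show (0 : ℝ) ≤ 2 by norm_num)
  linear_combination (-2 * √2 * M ^ 3 - 21 * h * M ^ 2 + 9 * M ^ 3) * this

lemma cube_sub_cube_le {h M z : ℝ} (hM : 0 ≤ M) (hz : 0 ≤ z) (hMz : M - 2 * h ≤ z) :
    49 * ((M - h) ^ 3 - z ^ 3) ≤ (9 + 4 * √2) * M ^ 3 := by
  obtain ⟨hs, -⟩ := sqrt_two_bounds
  rcases le_total (2 * h) M with h2M | hM2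
  · have hz3 : (M - 2 * h) ^ 3 ≤ z ^ 3 := pow_le_pow_left₀ (by linarith) hMz 3
    have := cube_sub_cube_identity h M
    nlinarith [mul_nonneg (sq_nonneg (7 * h - (3 - √2) * M))
      (show 0 ≤ (3 + 2 * √2) * M - 7 * h by nlinarith)]
  · have hMh : (M - h) ^ 3 ≤ (M / 2) ^ 3 := by
      rcases le_total 0 (M - h) with h0 | h0
      · exact pow_le_pow_left₀ h0 (by linarith) 3
      · nlinarith [pow_nonneg (show 0 ≤ M / 2 by linarith) 3, pow_two_nonneg (M - h)]
    nlinarith [pow_nonneg hz 3, pow_nonneg hM 3]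

lemma le_cube_sub_cube {h L : ℝ} (hL : 2 ≤ L) (hlow : (3 - √2) * L ≤ 7 * h)
    (hhigh : 7 * h ≤ (3 - √2) * L + 7) :
    (9 + 4 * √2) * L ^ 3 - 294 * L ≤ 49 * ((L - h) ^ 3 - (L - 2 * h) ^ 3) := by
  obtain ⟨hs, hs'⟩ := sqrt_two_bounds
  have hsq : (7 * h - (3 - √2) * L) ^ 2 ≤ 49 := by nlinarith
  have := cube_sub_cube_identity h L
  nlinarith [mul_le_mul hsq (show (3 + 2 * √2) * L - 7 * h ≤ 6 * L by nlinarith)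
    (show 0 ≤ (3 + 2 * √2) * L - 7 * h by nlinarith) (by norm_num)]

def generatorIndex (h : ℕ) : Set (ℕ × ℕ) :=
  {q | h ≤ q.1 ∧ q.1 ≤ 2 * h - 1 ∧ q.1 ≤ q.2}

-- The generators of `R^h` of degree at most `p^L`, for `h ≥ 1`.
def slots (h L : ℕ) : Finset (ℕ × ℕ) :=
  {q ∈ Ico h (2 * h) ×ˢ range (L + 1) | q.1 ≤ q.2}

section slots

variable {h L : ℕ}

lemma mem_slots {q : ℕ × ℕ} :
    q ∈ slots h L ↔ h ≤ q.1 ∧ q.1 < 2 * h ∧ q.1 ≤ q.2 ∧ q.2 ≤ L := by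
  simp only [slots, mem_filter, mem_product, mem_Ico, mem_range]
  omega

lemma card_slots_le : #(slots h L) ≤ (L + 1) ^ 2 := by
  calc #(slots h L) ≤ #(range (L + 1) ×ˢ range (L + 1)) :=
        card_le_card fun q hq => by
          simp only [mem_slots] at hq
          simp only [mem_product, mem_range]
          omega
    _ = (L + 1) ^ 2 := by rw [card_product, card_range, sq]

lemma sum_slots {M : Type*} [AddCommMonoid M] (f : ℕ → M) :
    ∑ q ∈ slots h L, f q.2 = ∑ k ∈ Ico h (min (2 * h) (L + 1)), ∑ t ∈ Ico k (L + 1), f t :=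
  sum_finset_product _ _ _ fun q => by
    simp only [mem_slots, mem_Ico, lt_min_iff]
    omega

end slots

lemma sum_slots_le (h L : ℕ) :
    294 * ∑ q ∈ slots h L, ((L : ℝ) + 1 - q.2) ≤ (9 + 4 * √2) * (L + 2) ^ 3 := by
  rw [sum_slots fun t => (L : ℝ) + 1 - t]
  set K := min (2 * h) (L + 1)
  rcases lt_or_ge K h with hKh | hhK
  · rw [Ico_eq_empty_of_le hKh.le, sum_empty, mul_zero]
    positivity
  have hsum : ∑ k ∈ Ico h K, ∑ t ∈ Ico k (L + 1), ((L : ℝ) + 1 - t) ≤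
      ((L : ℝ) + 2 - h) ^ 3 / 6 - ((L : ℝ) + 2 - K) ^ 3 / 6 := by
    refine (sum_le_sum fun k hk => ?_).trans_eq
      (sum_Ico_sub_succ (fun k : ℕ => ((L : ℝ) + 2 - k) ^ 3 / 6) hhK)
    rw [sum_Ico_sub_natCast _ (by simp only [mem_Ico] at hk; omega)]
    push_cast
    nlinarith [sq_nonneg ((L : ℝ) + 1 - k)]
  have hK₁ : (K : ℝ) ≤ 2 * h := by exact_mod_cast min_le_left _ _
  have hK₂ : (K : ℝ) ≤ L + 1 := by exact_mod_cast min_le_right _ _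
  have := cube_sub_cube_le (h := h) (M := L + 2) (z := L + 2 - K) (by positivity) (by linarith)
    (by linarith)
  linarith

lemma sum_slots_ge {h L : ℕ} (hhL : 2 * h ≤ L) :
    49 * (((L : ℝ) - h) ^ 3 - (L - 2 * h) ^ 3) ≤ 294 * ∑ q ∈ slots h L, ((L : ℝ) - q.2) := by
  rw [sum_slots fun t => (L : ℝ) - t, min_eq_left (by omega : 2 * h ≤ L + 1)]
  have hsum : ((L : ℝ) - h) ^ 3 / 6 - ((L : ℝ) - 2 * h) ^ 3 / 6 ≤
      ∑ k ∈ Ico h (2 * h), ∑ t ∈ Ico k (L + 1), ((L : ℝ) - t) := by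
    have := sum_Ico_sub_succ (fun k : ℕ => ((L : ℝ) - k) ^ 3 / 6) (by omega : h ≤ 2 * h)
    push_cast at this
    refine this.symm.trans_le (sum_le_sum fun k hk => ?_)
    simp only [mem_Ico] at hk
    have hkL : (k : ℝ) + 1 ≤ L := by exact_mod_cast (by omega : k + 1 ≤ L)
    rw [sum_Ico_sub_natCast _ (by omega)]
    push_cast
    nlinarith
  linarith

lemma card_slots_mul_log_le (h L : ℕ) :
    (#(slots h L) : ℝ) * log #(slots h L) ≤ 2 * (L + 1) ^ 2 * log (L + 1) := by
  have hlog : 0 ≤ log ((L : ℝ) + 1) := log_nonneg (le_add_of_nonneg_left (Nat.cast_nonneg L))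
  have hN : (#(slots h L) : ℝ) ≤ (L + 1) ^ 2 := by exact_mod_cast card_slots_le
  rcases Nat.eq_zero_or_pos #(slots h L) with h0 | h0
  · rw [h0, Nat.cast_zero, zero_mul]
    positivity
  calc (#(slots h L) : ℝ) * log #(slots h L) ≤ (L + 1) ^ 2 * log ((L + 1) ^ 2) :=
        mul_le_mul hN (log_le_log (by exact_mod_cast h0) hN) (log_natCast_nonneg _) (by positivity)
    _ = 2 * (L + 1) ^ 2 * log (L + 1) := by rw [log_pow]; push_cast; ring

section polyCountMRS

variable {p h n : ℕ}

lemma polyCountMRS_eq_card :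
    polyCountMRS p h n = Nat.card (BoundedMonomials (generatorIndex h) (fun q => p ^ q.2) n) :=
  rfl

lemma generatorIndex_subset_slots (hp : 1 < p) (hh : 1 ≤ h) :
    ∀ q ∈ generatorIndex h, p ^ q.2 ≤ n → q ∈ slots h (Nat.log p n) :=
  fun _q ⟨h₁, h₂, h₃⟩ hqn => mem_slots.2 (by have := Nat.le_log_of_pow_le hp hqn; omega)

lemma slots_subset_generatorIndex {L : ℕ} : ∀ q ∈ slots h L, q ∈ generatorIndex h :=
  fun _q hq => by obtain ⟨h₁, h₂, h₃, -⟩ := mem_slots.1 hq; exact ⟨h₁, by omega, h₃⟩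

variable (p h n) in
lemma finite_boundedMonomials_generatorIndex (hp : 1 < p) (hh : 1 ≤ h) :
    Finite (BoundedMonomials (generatorIndex h) (fun q => p ^ q.2) n) :=
  BoundedMonomials.finite (fun q _ => by positivity) (generatorIndex_subset_slots hp hh)

lemma polyCountMRS_pos (hp : 1 < p) (hh : 1 ≤ h) : 0 < polyCountMRS p h n := by
  have := finite_boundedMonomials_generatorIndex p h n hp hh
  have : Nonempty (BoundedMonomials (generatorIndex h) (fun q => p ^ q.2) n) :=
    ⟨⟨0, by simp, by simp⟩⟩
  rw [polyCountMRS_eq_card]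
  exact Nat.card_pos

lemma polyCountMRS_le_pow (hp : 1 < p) (hh : 1 ≤ h) :
    polyCountMRS p h n ≤ p ^ ∑ q ∈ slots h (Nat.log p n), (Nat.log p n + 1 - q.2) := by
  rw [polyCountMRS_eq_card, ← prod_pow_eq_pow_sum]
  refine (BoundedMonomials.card_le_prod (fun q _ => by positivity)
    (generatorIndex_subset_slots hp hh)).trans (prod_le_prod' fun q hq => ?_)
  have htL : q.2 ≤ Nat.log p n := (mem_slots.1 hq).2.2.2
  rw [Nat.add_one_le_iff, Nat.div_lt_iff_lt_mul (by positivity), ← pow_add,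
    Nat.sub_add_cancel (by omega)]
  exact Nat.lt_pow_succ_log_self hp n

lemma pow_le_polyCountMRS (hp : 1 < p) (hn : n ≠ 0) (hh : 1 ≤ h) :
    p ^ ∑ q ∈ slots h (Nat.log p n), (Nat.log p n - q.2) ≤
      #(slots h (Nat.log p n)) ^ #(slots h (Nat.log p n)) * polyCountMRS p h n := by
  set L := Nat.log p n
  set S := slots h L
  set N := #S
  have := finite_boundedMonomials_generatorIndex p h n hp hh
  -- every slot gets an equal share `n / N` of the degree budget
  let b : ℕ × ℕ → ℕ := fun q => n / (N * p ^ q.2)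
  have hb : ∑ q ∈ S, b q * p ^ q.2 ≤ n :=
    calc ∑ q ∈ S, b q * p ^ q.2 ≤ ∑ _q ∈ S, n / N := sum_le_sum fun q _ => by
          change n / (N * p ^ q.2) * p ^ q.2 ≤ n / N
          rw [← Nat.div_div_eq_div_mul]
          exact Nat.div_mul_le_self _ _
      _ ≤ n := by rw [sum_const, smul_eq_mul]; exact Nat.mul_div_le n N
  calc p ^ ∑ q ∈ S, (L - q.2) ≤ ∏ q ∈ S, (N * (b q + 1)) := by
        rw [← prod_pow_eq_pow_sum]
        refine prod_le_prod' fun q hq => (Nat.lt_of_mul_lt_mul_right (a := p ^ q.2) ?_).le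
        have hN : 0 < N := card_pos.2 ⟨q, hq⟩
        rw [← pow_add, Nat.sub_add_cancel (mem_slots.1 hq).2.2.2, mul_right_comm]
        exact (Nat.pow_log_le_self p hn).trans_lt (Nat.lt_mul_div_succ n (by positivity))
    _ = N ^ N * ∏ q ∈ S, (b q + 1) := by rw [prod_mul_distrib, prod_const]
    _ ≤ N ^ N * polyCountMRS p h n :=
        Nat.mul_le_mul_left _ (BoundedMonomials.prod_le_card slots_subset_generatorIndex b hb)

lemma log_polyCountMRS_le (hp : 1 < p) (hh : 1 ≤ h) :
    log (polyCountMRS p h n) ≤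
      log p * ∑ q ∈ slots h (Nat.log p n), ((Nat.log p n : ℝ) + 1 - q.2) := by
  have hcount := log_le_log (by exact_mod_cast polyCountMRS_pos hp hh)
    (Nat.cast_le (α := ℝ).2 (polyCountMRS_le_pow (n := n) hp hh))
  rwa [Nat.cast_pow, log_pow, mul_comm, Nat.cast_sum, sum_congr rfl fun q hq => by
    rw [Nat.cast_sub (by have := (mem_slots.1 hq).2.2.2; omega), Nat.cast_add_one]] at hcount

lemma log_polyCountMRS_ge (hp : 1 < p) (hn : n ≠ 0) (hh : 1 ≤ h) :
    log p * ∑ q ∈ slots h (Nat.log p n), ((Nat.log p n : ℝ) - q.2) -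
        #(slots h (Nat.log p n)) * log #(slots h (Nat.log p n)) ≤
      log (polyCountMRS p h n) := by
  have hcount := log_le_log (by positivity) (Nat.cast_le (α := ℝ).2 (pow_le_polyCountMRS hp hn hh))
  rw [Nat.cast_mul, log_mul (by exact_mod_cast Nat.pow_self_pos.ne')
    (by exact_mod_cast (polyCountMRS_pos hp hh).ne'), Nat.cast_pow, Nat.cast_pow, log_pow, log_pow,
    Nat.cast_sum, sum_congr rfl fun q hq => Nat.cast_sub (mem_slots.1 hq).2.2.2] at hcount
  linarith

end polyCountMRS

lemma natLog_mul_log_le_log {p n : ℕ} (hp : 1 < p) (hn : n ≠ 0) :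
    (Nat.log p n : ℝ) * log p ≤ log n ∧ log n < (Nat.log p n + 1) * log p := by
  have hn' : (0 : ℝ) < n := by exact_mod_cast Nat.pos_of_ne_zero hn
  constructor
  · rw [← log_pow]
    exact log_le_log (by positivity) (by exact_mod_cast Nat.pow_log_le_self p hn)
  · rw [← Nat.cast_add_one, ← log_pow]
    exact log_lt_log hn' (by exact_mod_cast Nat.lt_pow_succ_log_self hp n)

lemma le_log_of_two_le {p : ℕ} (hp : 2 ≤ p) : (0.69 : ℝ) ≤ log p := by
  linarith [log_two_gt_d9, log_le_log (by norm_num) (show (2 : ℝ) ≤ p by exact_mod_cast hp)]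

noncomputable def leadingTerm (x y : ℝ) : ℝ := (9 + 4 * √2) / (294 * x ^ 2) * y ^ 3

noncomputable def errorTerm (y : ℝ) : ℝ := max 1 (log y * y ^ 2)

lemma one_le_errorTerm (y : ℝ) : 1 ≤ errorTerm y := le_max_left _ _

lemma sq_le_errorTerm {y : ℝ} (hy : 0 ≤ y) : y ^ 2 ≤ 8 * errorTerm y := by
  rcases le_total y (exp 1) with hye | hye
  · have : exp 1 < 2.8 := by have := exp_one_lt_d9; norm_num at this ⊢; linarith
    nlinarith [one_le_errorTerm y]
  · have : 1 ≤ log y := by rwa [le_log_iff_exp_le ((exp_pos 1).trans_le hye)]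
    have : log y * y ^ 2 ≤ errorTerm y := le_max_right _ _
    nlinarith [sq_nonneg y]

lemma le_leadingTerm_add_errorTerm {x y L X : ℝ} (hx : 1 / 2 ≤ x) (hy : 0 ≤ y) (hL : 0 ≤ L)
    (hLy : L * x ≤ y) (hX : 294 * X ≤ x * ((9 + 4 * √2) * (L + 2) ^ 3)) :
    X ≤ leadingTerm x y + 20 * (1 + x) * errorTerm y := by
  obtain ⟨hs, hs'⟩ := sqrt_two_bounds
  have hE := sq_le_errorTerm hy
  have hE1 := one_le_errorTerm y
  have hcube : x ^ 3 * (L + 2) ^ 3 ≤ (y + 2 * x) ^ 3 := by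
    rw [← mul_pow]; exact pow_le_pow_left₀ (by positivity) (by linarith) 3
  have herr : (9 + 4 * √2) * (6 * y ^ 2 * x + 12 * y * x ^ 2 + 8 * x ^ 3) ≤
      294 * x ^ 2 * (20 * (1 + x) * errorTerm y) := by
    have h₁ : 6 * y ^ 2 * x + 12 * y * x ^ 2 + 8 * x ^ 3 ≤
        x ^ 2 * (18 * y ^ 2 + 6 + 8 * x) := by
      nlinarith [mul_nonneg (mul_nonneg (sq_nonneg y) (by linarith : 0 ≤ x))
        (by linarith : 0 ≤ 2 * x - 1), mul_nonneg (sq_nonneg x) (sq_nonneg (y - 1))]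
    have h₂ : 18 * y ^ 2 + 6 + 8 * x ≤ 150 * (1 + x) * errorTerm y := by nlinarith
    have h₃ : 0 ≤ 6 * y ^ 2 * x + 12 * y * x ^ 2 + 8 * x ^ 3 := by positivity
    calc (9 + 4 * √2) * (6 * y ^ 2 * x + 12 * y * x ^ 2 + 8 * x ^ 3)
        ≤ 15 * (x ^ 2 * (150 * (1 + x) * errorTerm y)) := by
          gcongr ?_ * ?_
          · linarith
          · exact h₁.trans (by gcongr)
      _ ≤ 294 * x ^ 2 * (20 * (1 + x) * errorTerm y) := by
          nlinarith [mul_nonneg (mul_nonneg (sq_nonneg x) (by linarith : 0 ≤ 1 + x))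
            (by linarith : 0 ≤ errorTerm y)]
  have key : 294 * x ^ 2 * X ≤
      (9 + 4 * √2) * y ^ 3 + 294 * x ^ 2 * (20 * (1 + x) * errorTerm y) := by
    nlinarith [mul_le_mul_of_nonneg_left hX (sq_nonneg x),
      mul_le_mul_of_nonneg_left hcube (show 0 ≤ 9 + 4 * √2 by linarith)]
  have hx0 : 0 < x := by linarith
  rw [leadingTerm, div_mul_eq_mul_div, div_add' _ _ _ (by positivity),
    le_div_iff₀ (by positivity)]
  linarith

lemma leadingTerm_sub_errorTerm_le {x y L X : ℝ} (hx : 0.69 ≤ x) (hL : 4 ≤ L)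
    (hLy : L * x ≤ y) (hyL : y < (L + 1) * x)
    (hX : x * ((9 + 4 * √2) * L ^ 3 - 294 * L) - 588 * (L + 1) ^ 2 * log (L + 1) ≤ 294 * X) :
    leadingTerm x y - 20 * (1 + x) * errorTerm y ≤ X := by
  obtain ⟨hs, hs'⟩ := sqrt_two_bounds
  have hx0 : 0 < x := by linarith
  have hy : 2.76 ≤ y := by nlinarith
  have hlogy : 1 ≤ log y := by
    rw [le_log_iff_exp_le (by linarith)]
    have := exp_one_lt_d9
    norm_num at this ⊢
    linarith
  have hE : log y * y ^ 2 ≤ errorTerm y := le_max_right _ _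
  have hL₁ : L + 1 ≤ 2 * y := by nlinarith
  have hlogL : log (L + 1) ≤ 2 * log y := by
    calc log (L + 1) ≤ log (2 * y) := log_le_log (by linarith) hL₁
      _ = log 2 + log y := log_mul (by norm_num) (by linarith)
      _ ≤ 2 * log y := by linarith [log_two_lt_d9]
  have herr : (9 + 4 * √2) * x * (3 * L ^ 2 + 3 * L + 1) + 294 * x * L +
      588 * (L + 1) ^ 2 * log (L + 1) ≤ 5880 * (1 + x) * errorTerm y := by
    have hxL : x * L ≤ y := by linarith
    have hLy' : L ≤ 1.45 * y := by nlinarith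
    have ha : x * (3 * L ^ 2 + 3 * L + 1) ≤ 6 * y ^ 2 := by nlinarith
    have hb : x * L ≤ y ^ 2 := by nlinarith
    have hc : (L + 1) ^ 2 * log (L + 1) ≤ 4 * y ^ 2 * (2 * log y) :=
      mul_le_mul (by nlinarith) hlogL (log_nonneg (by linarith)) (by positivity)
    have hy2 : y ^ 2 ≤ log y * y ^ 2 := by nlinarith [sq_nonneg y]
    have hE0 : 0 ≤ errorTerm y := by linarith [one_le_errorTerm y]
    nlinarith [mul_le_mul_of_nonneg_left ha (show 0 ≤ 9 + 4 * √2 by linarith),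
      mul_le_mul_of_nonneg_left hs' (show 0 ≤ x * (3 * L ^ 2 + 3 * L + 1) by positivity),
      mul_nonneg hx0.le hE0]
  have hcube : y ^ 3 ≤ (L + 1) ^ 3 * x ^ 3 := by
    rw [← mul_pow]; exact pow_le_pow_left₀ (by linarith) hyL.le 3
  rw [leadingTerm, div_mul_eq_mul_div, sub_le_iff_le_add, div_le_iff₀ (by positivity)]
  nlinarith [mul_le_mul_of_nonneg_left herr (sq_nonneg x),
    mul_le_mul_of_nonneg_left hcube (show 0 ≤ 9 + 4 * √2 by linarith)]

lemma leadingTerm_le_errorTerm {x y : ℝ} (hx : 0 < x) (hy : 0 ≤ y) (hyx : y < 4 * x) :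
    leadingTerm x y ≤ 20 * (1 + x) * errorTerm y := by
  obtain ⟨-, hs'⟩ := sqrt_two_bounds
  have hcube : y ^ 3 ≤ (4 * x) ^ 3 := pow_le_pow_left₀ hy hyx.le 3
  calc leadingTerm x y ≤ 15 * (4 * x) ^ 3 / (294 * x ^ 2) := by
        rw [leadingTerm, div_mul_eq_mul_div]
        gcongr
        linarith
    _ ≤ 20 * (1 + x) * 1 := by
        rw [div_le_iff₀ (by positivity)]
        nlinarith [pow_pos hx 3]
    _ ≤ 20 * (1 + x) * errorTerm y := by gcongr; exact one_le_errorTerm y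

section main

variable {p n : ℕ}

lemma log_polyCountMRS_le_leadingTerm_add (hp : 2 ≤ p) (hn : n ≠ 0) {h : ℕ} (hh : 1 ≤ h) :
    log (polyCountMRS p h n) ≤
      leadingTerm (log p) (log n) + 20 * (1 + log p) * errorTerm (log n) := by
  have hx := le_log_of_two_le hp
  refine le_leadingTerm_add_errorTerm (L := Nat.log p n) (by linarith) (log_natCast_nonneg n)
    (Nat.cast_nonneg _) (natLog_mul_log_le_log hp hn).1 ?_
  have hcount := log_polyCountMRS_le (n := n) hp hh
  have hsum := sum_slots_le h (Nat.log p n)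
  nlinarith [mul_le_mul_of_nonneg_left hsum (show 0 ≤ log p by linarith)]

lemma exists_leadingTerm_sub_le_log_polyCountMRS (hp : 2 ≤ p) (hn : n ≠ 0) :
    ∃ h, 1 ≤ h ∧ leadingTerm (log p) (log n) - 20 * (1 + log p) * errorTerm (log n) ≤
      log (polyCountMRS p h n) := by
  have hx := le_log_of_two_le hp
  obtain ⟨hLy, hyL⟩ := natLog_mul_log_le_log hp hn
  set L := Nat.log p n
  rcases lt_or_ge L 4 with hL | hL
  · refine ⟨1, le_rfl, ?_⟩
    have hL' : (L : ℝ) + 1 ≤ 4 := by exact_mod_cast hL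
    have := leadingTerm_le_errorTerm (x := log p) (by linarith) (log_natCast_nonneg n)
      (by nlinarith [mul_le_mul_of_nonneg_right hL' (show 0 ≤ log (p : ℝ) by linarith)])
    linarith [log_natCast_nonneg (polyCountMRS p 1 n)]
  obtain ⟨hs, hs'⟩ := sqrt_two_bounds
  have hL' : (4 : ℝ) ≤ L := by exact_mod_cast hL
  set r : ℝ := (3 - √2) * L / 7 with hr
  have hr0 : 0 < r := div_pos (mul_pos (by linarith) (by linarith)) (by norm_num)
  have hh : 1 ≤ ⌈r⌉₊ := Nat.one_le_iff_ne_zero.2 (Nat.ceil_pos.2 hr0).ne'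
  refine ⟨⌈r⌉₊, hh, ?_⟩
  have hlow := Nat.le_ceil r
  have hhigh := Nat.ceil_lt_add_one hr0.le
  have h2L : 2 * ⌈r⌉₊ ≤ L := by
    have : (2 * ⌈r⌉₊ : ℝ) ≤ L := by nlinarith
    exact_mod_cast this
  have hcube := le_cube_sub_cube (h := ⌈r⌉₊) (L := L) (by linarith) (by linarith)
    (by linarith)
  have hsum := sum_slots_ge h2L
  have hcount := log_polyCountMRS_ge (h := ⌈r⌉₊) (by omega : 1 < p) hn hh
  have hN := card_slots_mul_log_le ⌈r⌉₊ L
  refine leadingTerm_sub_errorTerm_le hx hL' hLy hyL ?_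
  nlinarith [mul_le_mul_of_nonneg_left (hcube.trans hsum) (show 0 ≤ log p by linarith)]

end main

/-- `log (max over h of dim R^h_{≤n}) = ((9+4√2)/(294 (log p)^2)) (log n)^3
  + O(log log n · (log n)^2)`. -/
theorem stmt7 (p : ℕ) (hp : p.Prime) : ∃ C : ℝ, ∀ n : ℕ, 2 ≤ n →
    (∀ h : ℕ, 1 ≤ h →
      Real.log (polyCountMRS p h n) ≤
        (9 + 4 * Real.sqrt 2) / (294 * (Real.log p) ^ 2) * (Real.log n) ^ 3 +
          C * max 1 (Real.log (Real.log n) * (Real.log n) ^ 2)) ∧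
    (∃ h : ℕ, 1 ≤ h ∧
      (9 + 4 * Real.sqrt 2) / (294 * (Real.log p) ^ 2) * (Real.log n) ^ 3 -
          C * max 1 (Real.log (Real.log n) * (Real.log n) ^ 2) ≤
        Real.log (polyCountMRS p h n)) :=
  ⟨20 * (1 + Real.log p), fun n hn =>
    ⟨fun _ hh => log_polyCountMRS_le_leadingTerm_add hp.two_le (by omega) hh,
      exists_leadingTerm_sub_le_log_polyCountMRS hp.two_le (by omega)⟩⟩
end

section
/- For an odd prime p and nonzero integer u, there exists ℓ ∈ Z_{(p)}^× with v_p(ℓ^u − 1) equal to: 0 if (p−1) does not divide u, and 1 + v_p(u) if (p−1) divides u. Consequently, the greatest common divisor over all ℓ ∈ Z coprime to p of ℓ^u − 1 has p-adic valuation 0 if (p−1) ∤ u and 1 + v_p(u) if (p−1) | u. -/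
/-!
For `p ∤ ℓ`, Fermat gives `p ∣ ℓ ^ (p - 1) - 1`, so when `(p - 1) ∣ n` the lifting-the-exponent
lemma yields `v_p(ℓ ^ n - 1) ≥ 1 + v_p(n)`, with equality for `ℓ = 1 + p`. When `(p - 1) ∤ n`, the
cyclic group `(ZMod p)ˣ` of order `p - 1` has an element whose `n`-th power is not `1`, and any
integer lifting it has `v_p(ℓ ^ n - 1) = 0`. Negative exponents reduce to positive ones because
`ℓ⁻¹ - 1 = -(ℓ - 1) / ℓ` and `ℓ` is a `p`-adic unit.
-/

section

variable {p : ℕ} [hp : Fact p.Prime]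

theorem padicValInt_eq_emultiplicity {z : ℤ} (hz : z ≠ 0) :
    (padicValInt p z : ℕ∞) = emultiplicity (p : ℤ) z := by
  rw [padicValInt, padicValNat_eq_emultiplicity (Int.natAbs_ne_zero.2 hz), Int.emultiplicity_natAbs]

theorem padicValInt_pow_sub_one (hodd : Odd p) {a : ℤ} (ha : (p : ℤ) ∣ a - 1) (ha1 : a ≠ 1)
    {n : ℕ} (hn : n ≠ 0) :
    padicValInt p (a ^ n - 1) = padicValInt p (a - 1) + padicValNat p n := by
  have hpa : ¬ (p : ℤ) ∣ a := fun h =>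
    (Nat.prime_iff_prime_int.mp hp.out).not_dvd_one (by simpa using dvd_sub h ha)
  have lte := Int.emultiplicity_pow_sub_pow hp.out hodd ha hpa n
  rw [one_pow] at lte
  -- LTE makes the multiplicity of `a ^ n - 1` finite, so it is nonzero.
  have hne : a ^ n - 1 ≠ 0 := by
    rintro h
    rw [h, emultiplicity_zero, ← padicValInt_eq_emultiplicity (sub_ne_zero.2 ha1),
      ← padicValNat_eq_emultiplicity hn] at lte
    exact ENat.natCast_ne_top _ (by exact_mod_cast lte.symm)
  rw [← padicValInt_eq_emultiplicity hne, ← padicValInt_eq_emultiplicity (sub_ne_zero.2 ha1),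
    ← padicValNat_eq_emultiplicity hn] at lte
  exact_mod_cast lte

theorem one_add_padicValNat_le_padicValInt_pow_sub_one (hodd : Odd p) {a : ℤ}
    (ha : (p : ℤ) ∣ a - 1) {m : ℕ} (ham : a ^ m ≠ 1) :
    1 + padicValNat p m ≤ padicValInt p (a ^ m - 1) := by
  have hm : m ≠ 0 := by rintro rfl; exact ham (pow_zero a)
  have ha1 : a ≠ 1 := by rintro rfl; exact ham (one_pow m)
  have hval : 1 ≤ padicValInt p (a - 1) :=
    ((padicValInt_dvd_iff 1 _).1 (by simpa using ha)).resolve_left (sub_ne_zero.2 ha1)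
  rw [padicValInt_pow_sub_one hodd ha ha1 hm]
  omega

theorem padicValInt_one_add_self_pow_sub_one (hodd : Odd p) {n : ℕ} (hn : n ≠ 0) :
    padicValInt p ((1 + p) ^ n - 1) = 1 + padicValNat p n := by
  rw [padicValInt_pow_sub_one hodd (by simp) (by simpa using hp.out.ne_zero) hn,
    add_sub_cancel_left, padicValInt.self hp.out.one_lt]

theorem dvd_pow_card_sub_one_sub_one {ℓ : ℤ} (hℓ : ¬ (p : ℤ) ∣ ℓ) :
    (p : ℤ) ∣ ℓ ^ (p - 1) - 1 := by
  rw [← ZMod.intCast_zmod_eq_zero_iff_dvd] at hℓ ⊢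
  push_cast
  rw [sub_eq_zero]
  exact ZMod.pow_card_sub_one_eq_one hℓ

theorem one_add_padicValNat_le_padicValInt_pow_sub_one_of_dvd (hodd : Odd p) {ℓ : ℤ}
    (hℓ : ¬ (p : ℤ) ∣ ℓ) {n : ℕ} (hn : p - 1 ∣ n) (hℓn : ℓ ^ n ≠ 1) :
    1 + padicValNat p n ≤ padicValInt p (ℓ ^ n - 1) := by
  obtain ⟨m, rfl⟩ := hn
  have hm : m ≠ 0 := by rintro rfl; simp at hℓn
  have hp2 := hp.out.two_le
  rw [pow_mul] at hℓn ⊢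
  rw [padicValNat.mul (by omega) hm,
    padicValNat.eq_zero_of_not_dvd (Nat.not_dvd_of_pos_of_lt (by omega) (by omega)), zero_add]
  exact one_add_padicValNat_le_padicValInt_pow_sub_one hodd (dvd_pow_card_sub_one_sub_one hℓ) hℓn

theorem exists_not_dvd_pow_sub_one {n : ℕ} (hn : ¬ p - 1 ∣ n) :
    ∃ ℓ : ℤ, ¬ (p : ℤ) ∣ ℓ ∧ ¬ (p : ℤ) ∣ ℓ ^ n - 1 := by
  have hexp : Monoid.exponent (ZMod p)ˣ = p - 1 := by
    rw [IsCyclic.exponent_eq_card, Nat.card_eq_fintype_card, ZMod.card_units]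
  rw [← hexp, Monoid.exponent_dvd_iff_forall_pow_eq_one, not_forall] at hn
  obtain ⟨g, hg⟩ := hn
  obtain ⟨ℓ, hℓ⟩ := ZMod.intCast_surjective (g : ZMod p)
  refine ⟨ℓ, ?_, ?_⟩ <;> rw [← ZMod.intCast_zmod_eq_zero_iff_dvd] <;> push_cast [hℓ]
  · exact g.ne_zero
  · rwa [sub_eq_zero, ← Units.val_pow_eq_pow_val, Units.val_eq_one]

theorem exists_padicValInt_pow_sub_one_eq (hodd : Odd p) {n : ℕ} (hn : n ≠ 0) :
    ∃ ℓ : ℤ, ¬ (p : ℤ) ∣ ℓ ∧ ℓ ^ n ≠ 1 ∧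
      padicValInt p (ℓ ^ n - 1) = if p - 1 ∣ n then 1 + padicValNat p n else 0 := by
  split_ifs with h
  · have hval := padicValInt_one_add_self_pow_sub_one hodd hn
    refine ⟨1 + p, ?_, fun h1 => ?_, hval⟩
    · rw [dvd_add_left dvd_rfl]
      exact (Nat.prime_iff_prime_int.mp hp.out).not_dvd_one
    · rw [h1, sub_self, padicValInt.zero] at hval
      omega
  · obtain ⟨ℓ, hℓ, hℓn⟩ := exists_not_dvd_pow_sub_one h
    exact ⟨ℓ, hℓ, fun h1 => hℓn (by simp [h1]), padicValInt.eq_zero_of_not_dvd hℓn⟩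

theorem le_padicValInt_pow_sub_one (hodd : Odd p) {ℓ : ℤ} (hℓ : ¬ (p : ℤ) ∣ ℓ) {n : ℕ}
    (hℓn : ℓ ^ n ≠ 1) :
    (if p - 1 ∣ n then 1 + padicValNat p n else 0) ≤ padicValInt p (ℓ ^ n - 1) := by
  split_ifs with h
  · exact one_add_padicValNat_le_padicValInt_pow_sub_one_of_dvd hodd hℓ h hℓn
  · exact Nat.zero_le _

theorem padicValRat_inv_sub_one {y : ℚ} (hy : padicValRat p y = 0) :
    padicValRat p (y⁻¹ - 1) = padicValRat p (y - 1) := by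
  rcases eq_or_ne y 0 with rfl | hy0
  · simp
  rcases eq_or_ne y 1 with rfl | hy1
  · simp
  rw [show y⁻¹ - 1 = -(y - 1) * y⁻¹ by field_simp; ring,
    padicValRat.mul (neg_ne_zero.2 (sub_ne_zero.2 hy1)) (inv_ne_zero hy0), padicValRat.neg,
    padicValRat.inv, hy, neg_zero, add_zero]

theorem padicValRat_zpow_sub_one {x : ℚ} (hx : padicValRat p x = 0) (u : ℤ) :
    padicValRat p (x ^ u - 1) = padicValRat p (x ^ u.natAbs - 1) := by
  obtain ⟨n, rfl | rfl⟩ := Int.eq_nat_or_neg u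
  · simp
  · rw [zpow_neg, Int.natAbs_neg, Int.natAbs_natCast, zpow_natCast]
    exact padicValRat_inv_sub_one (by simp [hx])

theorem padicValRat_intCast_zpow_sub_one {ℓ : ℤ} (hℓ : ¬ (p : ℤ) ∣ ℓ) (u : ℤ) :
    padicValRat p ((ℓ : ℚ) ^ u - 1) = padicValInt p (ℓ ^ u.natAbs - 1) := by
  rw [padicValRat_zpow_sub_one (by simp [padicValInt.eq_zero_of_not_dvd hℓ]) u,
    ← padicValRat.of_int]
  push_cast
  rfl

end

theorem zpow_eq_one_iff_pow_natAbs_eq_one {G₀ : Type*} [GroupWithZero G₀] (x : G₀) (u : ℤ) :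
    x ^ u = 1 ↔ x ^ u.natAbs = 1 := by
  obtain ⟨n, rfl | rfl⟩ := Int.eq_nat_or_neg u <;> simp

/-- For an odd prime `p` and nonzero integer `u`, the minimum over integers `ℓ` coprime
to `p` (with `ℓ^u ≠ 1`) of `v_p(ℓ^u - 1)` is `0` if `(p-1) ∤ u` and `1 + v_p(u)` if
`(p-1) ∣ u`; equivalently the `p`-adic valuation of `gcd_ℓ (ℓ^u - 1)` is this value. -/
theorem stmt15 (p : ℕ) (hp : p.Prime) (hodd : Odd p) (u : ℤ) (hu : u ≠ 0) :
    (∃ ℓ : ℤ, ¬ (p : ℤ) ∣ ℓ ∧ (ℓ : ℚ) ^ u ≠ 1 ∧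
      padicValRat p ((ℓ : ℚ) ^ u - 1) =
        (if ((p : ℤ) - 1) ∣ u then 1 + (padicValInt p u : ℤ) else 0)) ∧
    (∀ ℓ : ℤ, ¬ (p : ℤ) ∣ ℓ → (ℓ : ℚ) ^ u ≠ 1 →
      (if ((p : ℤ) - 1) ∣ u then 1 + (padicValInt p u : ℤ) else 0) ≤
        padicValRat p ((ℓ : ℚ) ^ u - 1)) := by
  have : Fact p.Prime := ⟨hp⟩
  have hdvd : (p : ℤ) - 1 ∣ u ↔ p - 1 ∣ u.natAbs := by
    rw [← Int.natCast_dvd, Nat.cast_sub hp.one_le, Nat.cast_one]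
  have hbound : (if ((p : ℤ) - 1) ∣ u then 1 + (padicValInt p u : ℤ) else 0) =
      ((if p - 1 ∣ u.natAbs then 1 + padicValNat p u.natAbs else 0 : ℕ) : ℤ) := by
    simp only [hdvd]
    split_ifs <;> simp only [padicValInt, Nat.cast_add, Nat.cast_one, Nat.cast_zero]
  have hne_one (ℓ : ℤ) : (ℓ : ℚ) ^ u ≠ 1 ↔ ℓ ^ u.natAbs ≠ 1 := by
    rw [Ne, zpow_eq_one_iff_pow_natAbs_eq_one]
    exact_mod_cast Iff.rfl
  rw [hbound]
  obtain ⟨ℓ, hℓ, hℓ1, hℓv⟩ := exists_padicValInt_pow_sub_one_eq hodd (Int.natAbs_ne_zero.2 hu)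
  refine ⟨⟨ℓ, hℓ, (hne_one ℓ).2 hℓ1, ?_⟩, fun ℓ hℓ hℓ1 => ?_⟩
  · rw [padicValRat_intCast_zpow_sub_one hℓ, hℓv]
  · rw [padicValRat_intCast_zpow_sub_one hℓ]
    exact_mod_cast le_padicValInt_pow_sub_one hodd hℓ ((hne_one ℓ).1 hℓ1)
end
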